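/- arXiv:1712.03777 — 5 statements merged into one kernel-verified Lean document; each statement's English description precedes it below -/
import Mathlib

section
/- For a composition μ = (μ_1,...,μ_r) of m, the map sending a sequence t of type μ (i.e. a finite word of length m in the alphabet {1,...,r} in which symbol i occurs exactly μ_i times) to the permutation w(t) ∈ S_m—obtained by replacing, for each i from 1 to r, the occurrences of i in t (read left to right) by the numbers μ_1+...+μ_i, μ_1+...+μ_i − 1, ..., μ_1+...+μ_{i-1}+1 in that decreasing order—is a bijection from the set R(μ) of sequences of type μ onto the set X_{J(μ)}^{-1} · w_{J(μ)}. -/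
/- Conventions: `W = S_m` is `Equiv.Perm (Fin m)` (0-based values, positions and symbols:
symbol `i` of the paper, `1 ≤ i ≤ r`, is `i - 1 : ℕ` here).  The paper product `ab` is
`b * a` in Mathlib; in particular the paper element `x⁻¹ w_{J(μ)}` is `w0 * x⁻¹` here,
where `w0 = w_{J(μ)}` is characterised as the longest element of the Young subgroup.
Coxeter length = number of inversions. -/

def invLen {m : ℕ} (w : Equiv.Perm (Fin m)) : ℕ :=
  (Finset.univ.filter (fun p : Fin m × Fin m => p.1 < p.2 ∧ w p.2 < w p.1)).card

def inYoung {m : ℕ} (μ : Composition m) (u : Equiv.Perm (Fin m)) : Prop :=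
  ∀ i : Fin m, μ.index (u i) = μ.index i

def isMinRep {m : ℕ} (μ : Composition m) (x : Equiv.Perm (Fin m)) : Prop :=
  ∀ u : Equiv.Perm (Fin m), inYoung μ u → invLen x ≤ invLen (x * u)

/-- `t` is a sequence of type `μ`: a word of length `m` in the (0-based) symbols
`0, …, μ.length - 1`, in which symbol `k` occurs exactly `μ_k` times. -/
def ofTypeL {m : ℕ} (μ : Composition m) (t : List ℕ) : Prop :=
  t.length = m ∧ (∀ a ∈ t, a < μ.length) ∧
    ∀ k : Fin μ.length, t.count (k : ℕ) = μ.blocksFun k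

/-- The value at position `p` of the permutation `w(t)` associated to a sequence `t` of
type `μ`: the occurrences of symbol `k` in `t`, read left to right, are replaced by the
members `μ₁+⋯+μ_{k+1} - 1, …, μ₁+⋯+μ_k` (0-based) of the `k`-th block of `μ`, in
decreasing order. -/
def seqPermVal {m : ℕ} (μ : Composition m) (t : List ℕ) (p : ℕ) : ℕ :=
  μ.sizeUpTo (t.getD p 0 + 1) - 1 - (t.take p).count (t.getD p 0)

/-- `w = w(t)` for the sequence `t` of type `μ`. -/
def isSeqPerm {m : ℕ} (μ : Composition m) (t : List ℕ) (w : Equiv.Perm (Fin m)) : Prop :=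
  ∀ p : Fin m, (w p : ℕ) = seqPermVal μ t (p : ℕ)

/-!
The longest element `w₀` of the Young subgroup reverses every block: for a Young permutation `u`,
the inversions of `u w₀` are exactly the same-block pairs that are not inversions of `u`.
A permutation `x` is a minimal coset representative iff it is increasing on every block, since an
adjacent descent inside a block is removed by a Young transposition. So `x ↦ w₀ x⁻¹` identifies the
minimal representatives with the permutations `w` whose inverse decreases on every block. Such a
`w` is determined by the word `p ↦ (block of w p)`, and it sends the occurrences of each letter, in
decreasing order, onto that letter's block: this is exactly the recipe `t ↦ w(t)`.
-/

open Finset Equiv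

theorem List.count_ofFn {α : Type*} [DecidableEq α] {n : ℕ} (f : Fin n → α) (a : α) :
    (List.ofFn f).count a = #{i | f i = a} := by
  rw [← Multiset.coe_count, ← Fin.univ_val_map, Multiset.count_map, Finset.card_def,
    Finset.filter_val]
  simp_rw [eq_comm]

theorem List.count_take_lt_count_take {α : Type*} [BEq α] [LawfulBEq α] {l : List α} {p q : ℕ}
    (hpq : p < q) (hq : q ≤ l.length) (d : α) :
    (l.take p).count (l.getD p d) < (l.take q).count (l.getD p d) := by
  have hp : p < l.length := by omega
  calc (l.take p).count (l.getD p d) < (l.take (p + 1)).count (l.getD p d) := by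
        rw [List.take_add_one, List.getElem?_eq_getElem hp, List.count_append,
          List.getD_eq_getElem _ _ hp]
        simp
    _ ≤ _ := (List.take_sublist_take_left hpq).count_le _

namespace Composition

variable {m : ℕ} (μ : Composition m)

theorem index_eq_iff {j : Fin m} {k : Fin μ.length} :
    μ.index j = k ↔ μ.sizeUpTo k ≤ j ∧ (j : ℕ) < μ.sizeUpTo (k + 1) :=
  eq_comm.trans (μ.mem_range_embedding_iff'.symm.trans μ.mem_range_embedding_iff)

theorem monotone_index : Monotone μ.index := by
  intro a b hab
  by_contra! h
  have := μ.monotone_sizeUpTo (show (μ.index b : ℕ) + 1 ≤ μ.index a from h)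
  have := (μ.index_eq_iff.1 (rfl : μ.index a = _)).1
  have := (μ.index_eq_iff.1 (rfl : μ.index b = _)).2
  omega

theorem card_filter_index_eq (k : Fin μ.length) : #{j | μ.index j = k} = μ.blocksFun k := by
  have : ({j | μ.index j = k} : Finset (Fin m)) = univ.map (μ.embedding k).toEmbedding := by
    ext j
    rw [mem_filter, eq_comm, ← μ.mem_range_embedding_iff']
    simp
  simp [this]

def blockRevFun (j : Fin m) : Fin m :=
  ⟨μ.sizeUpTo (μ.index j) + μ.sizeUpTo (μ.index j + 1) - 1 - j, by
    have := μ.index_eq_iff.1 (rfl : μ.index j = _)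
    have := μ.sizeUpTo_le (μ.index j + 1)
    omega⟩

theorem val_blockRevFun (j : Fin m) : (μ.blockRevFun j : ℕ) =
    μ.sizeUpTo (μ.index j) + μ.sizeUpTo (μ.index j + 1) - 1 - j := rfl

theorem index_blockRevFun (j : Fin m) : μ.index (μ.blockRevFun j) = μ.index j := by
  have := μ.index_eq_iff.1 (rfl : μ.index j = _)
  rw [index_eq_iff, val_blockRevFun]
  omega

theorem blockRevFun_involutive : Function.Involutive μ.blockRevFun := by
  intro j
  have := μ.index_eq_iff.1 (rfl : μ.index j = _)
  ext
  rw [val_blockRevFun, index_blockRevFun, val_blockRevFun]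
  omega

def blockRev : Perm (Fin m) := μ.blockRevFun_involutive.toPerm

theorem index_blockRev (j : Fin m) : μ.index (μ.blockRev j) = μ.index j :=
  μ.index_blockRevFun j

theorem blockRev_blockRev (j : Fin m) : μ.blockRev (μ.blockRev j) = j :=
  μ.blockRevFun_involutive j

theorem blockRev_inv : μ.blockRev⁻¹ = μ.blockRev :=
  Function.Involutive.toPerm_symm _

theorem blockRev_mul_self : μ.blockRev * μ.blockRev = 1 :=
  mul_eq_one_iff_eq_inv.2 μ.blockRev_inv.symm

theorem strictAntiOn_blockRev (k : Fin μ.length) :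
    StrictAntiOn μ.blockRev {j | μ.index j = k} := by
  intro a (ha : μ.index a = k) b (hb : μ.index b = k) hab
  have := μ.index_eq_iff.1 ha
  have := μ.index_eq_iff.1 hb
  rw [Fin.lt_def] at hab ⊢
  simp only [blockRev, Function.Involutive.coe_toPerm, val_blockRevFun, ha, hb]
  omega

theorem mapsTo_blockRev (k : Fin μ.length) :
    Set.MapsTo μ.blockRev {j | μ.index j = k} {j | μ.index j = k} := fun j hj =>
  (μ.index_blockRev j).trans hj

end Composition

variable {m : ℕ} {μ : Composition m}

section Young

theorem inYoung_blockRev : inYoung μ μ.blockRev := μ.index_blockRev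

theorem inYoung_swap {p q : Fin m} (h : μ.index p = μ.index q) : inYoung μ (swap p q) := by
  intro i
  simp only [swap_apply_def]
  split_ifs <;> simp_all

theorem inYoung.inv {u : Perm (Fin m)} (hu : inYoung μ u) : inYoung μ u⁻¹ := fun i => by
  simpa using (hu (u⁻¹ i)).symm

theorem inYoung.lt_of_index_lt {u : Perm (Fin m)} (hu : inYoung μ u) {a b : Fin m}
    (h : μ.index a < μ.index b) : u a < u b := by
  by_contra! hba
  have := μ.monotone_index hba
  rw [hu, hu] at this
  exact this.not_gt h

theorem eq_one_of_inYoung_of_strictMonoOn {u : Perm (Fin m)} (hu : inYoung μ u)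
    (hmono : ∀ k, StrictMonoOn u {j | μ.index j = k}) : u = 1 := by
  have hu_mono : StrictMono u := by
    intro a b hab
    rcases (μ.monotone_index hab.le).lt_or_eq with h | h
    · exact hu.lt_of_index_lt h
    · exact hmono _ rfl h.symm hab
  ext j
  rw [hu_mono.apply_eq, Perm.one_apply]

end Young

section Inversions

def invSet (w : Perm (Fin m)) : Finset (Fin m × Fin m) := {p | p.1 < p.2 ∧ w p.2 < w p.1}

theorem invLen_eq_card_invSet (w : Perm (Fin m)) : invLen w = #(invSet w) := rfl

theorem mem_invSet {w : Perm (Fin m)} {p : Fin m × Fin m} :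
    p ∈ invSet w ↔ p.1 < p.2 ∧ w p.2 < w p.1 := by
  simp [invSet]

theorem invLen_one : invLen (1 : Perm (Fin m)) = 0 := by
  simp only [invLen_eq_card_invSet, card_eq_zero, eq_empty_iff_forall_notMem, mem_invSet,
    Perm.one_apply]
  exact fun p h => h.1.not_gt h.2

theorem eq_one_of_invLen_eq_zero {w : Perm (Fin m)} (h : invLen w = 0) : w = 1 := by
  have hw : StrictMono w := fun a b hab => by
    by_contra! hba
    have : (a, b) ∈ invSet w := mem_invSet.2 ⟨hab, hba.lt_of_ne (w.injective.ne hab.ne')⟩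
    rw [invLen_eq_card_invSet, card_eq_zero] at h
    simp [h] at this
  ext j
  rw [hw.apply_eq, Perm.one_apply]

theorem swap_apply_lt_swap_apply {p q a b : Fin m} (hq : (q : ℕ) = p + 1) (hab : a < b)
    (hne : (a, b) ≠ (p, q)) : swap p q a < swap p q b := by
  rw [Fin.lt_def] at hab
  simp only [swap_apply_def, Ne, Prod.ext_iff, Fin.ext_iff] at *
  split_ifs <;> simp only [Fin.lt_def] at * <;> omega

theorem invLen_mul_swap_lt {x : Perm (Fin m)} {p q : Fin m} (hq : (q : ℕ) = p + 1)
    (hdesc : x q < x p) : invLen (x * swap p q) < invLen x := by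
  have hpq : p < q := by rw [Fin.lt_def]; omega
  have hmem : (p, q) ∈ invSet x := mem_invSet.2 ⟨hpq, hdesc⟩
  rw [invLen_eq_card_invSet, invLen_eq_card_invSet, ← card_erase_add_one hmem, Nat.lt_succ_iff]
  refine card_le_card_of_injOn (fun r => (swap p q r.1, swap p q r.2)) ?_ ?_
  · intro r hr
    rw [mem_coe, mem_invSet] at hr
    have hr_ne : (r.1, r.2) ≠ (p, q) := by
      rintro ⟨⟩
      simp only [Perm.mul_apply, swap_apply_left, swap_apply_right] at hr
      exact hr.2.not_gt hdesc
    rw [mem_coe, mem_erase, mem_invSet]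
    refine ⟨?_, swap_apply_lt_swap_apply hq hr.1 hr_ne, by simpa using hr.2⟩
    intro h
    simp only [Prod.ext_iff, swap_apply_eq_iff, swap_apply_left, swap_apply_right] at h
    exact hr.1.not_gt (h.1 ▸ h.2 ▸ hpq)
  · intro r _ r' _ h
    simp only [Prod.ext_iff, (swap p q).injective.eq_iff] at h
    exact Prod.ext h.1 h.2

end Inversions

section LongestElement

def sameBlockPairs (μ : Composition m) : Finset (Fin m × Fin m) :=
  {p | p.1 < p.2 ∧ μ.index p.1 = μ.index p.2}

theorem invSet_subset_sameBlockPairs {u : Perm (Fin m)} (hu : inYoung μ u) :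
    invSet u ⊆ sameBlockPairs μ := by
  intro p hp
  rw [mem_invSet] at hp
  simp only [sameBlockPairs, mem_filter, mem_univ, true_and]
  refine ⟨hp.1, (μ.monotone_index hp.1.le).eq_of_not_lt fun h => ?_⟩
  exact (hu.lt_of_index_lt h).not_gt hp.2

theorem card_invSet_mul_blockRev {u : Perm (Fin m)} (hu : inYoung μ u) :
    #(invSet (u * μ.blockRev)) = #(sameBlockPairs μ \ invSet u) := by
  refine card_nbij' (fun p => (μ.blockRev p.2, μ.blockRev p.1))
    (fun p => (μ.blockRev p.2, μ.blockRev p.1)) ?_ ?_ (fun p _ => by simp [μ.blockRev_blockRev])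
    (fun p _ => by simp [μ.blockRev_blockRev])
  · intro p hp
    have hblock := (mem_filter.1 (invSet_subset_sameBlockPairs
      (fun i => (hu (μ.blockRev i)).trans (μ.index_blockRev i)) hp)).2.2
    rw [mem_coe, mem_invSet] at hp
    rw [mem_coe, mem_sdiff, sameBlockPairs, mem_filter, mem_invSet]
    refine ⟨⟨mem_univ _, μ.strictAntiOn_blockRev _ rfl hblock.symm hp.1, ?_⟩, fun h => ?_⟩
    · simp only [μ.index_blockRev, hblock]
    · exact lt_asymm h.2 hp.2
  · intro p hp
    simp only [mem_coe, mem_sdiff, sameBlockPairs, mem_filter, mem_univ, true_and, mem_invSet,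
      not_and, not_lt] at hp
    obtain ⟨⟨hlt, hblock⟩, hnot⟩ := hp
    rw [mem_coe, mem_invSet]
    refine ⟨μ.strictAntiOn_blockRev _ rfl hblock.symm hlt, ?_⟩
    simp only [Perm.mul_apply, μ.blockRev_blockRev]
    exact (hnot hlt).lt_of_ne (u.injective.ne hlt.ne)

theorem invLen_mul_blockRev_add_invLen {u : Perm (Fin m)} (hu : inYoung μ u) :
    invLen (u * μ.blockRev) + invLen u = #(sameBlockPairs μ) := by
  rw [invLen_eq_card_invSet, invLen_eq_card_invSet, card_invSet_mul_blockRev hu]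
  exact card_sdiff_add_card_eq_card (invSet_subset_sameBlockPairs hu)

theorem eq_blockRev_of_inYoung_of_forall_invLen_le {w0 : Perm (Fin m)} (hw0 : inYoung μ w0)
    (hw0max : ∀ u, inYoung μ u → invLen u ≤ invLen w0) : w0 = μ.blockRev := by
  have hw0_compl := invLen_mul_blockRev_add_invLen hw0
  have hrev_len := invLen_mul_blockRev_add_invLen (μ := μ) (u := 1) fun _ => rfl
  rw [one_mul, invLen_one] at hrev_len
  have := hw0max _ inYoung_blockRev
  have h := eq_one_of_invLen_eq_zero (show invLen (w0 * μ.blockRev) = 0 by omega)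
  rw [← μ.blockRev_inv, ← mul_eq_one_iff_eq_inv, h]

end LongestElement

section MinimalRepresentatives

theorem isMinRep_of_strictMonoOn {x : Perm (Fin m)}
    (hx : ∀ k, StrictMonoOn x {j | μ.index j = k}) : isMinRep μ x := by
  intro u hu
  rw [invLen_eq_card_invSet, invLen_eq_card_invSet]
  refine card_le_card_of_injOn (fun r => (u⁻¹ r.1, u⁻¹ r.2)) ?_ ?_
  · intro r hr
    rw [mem_coe, mem_invSet] at hr
    have hindex : μ.index r.1 < μ.index r.2 :=
      (μ.monotone_index hr.1.le).lt_of_ne fun h => lt_asymm hr.2 (hx _ rfl h.symm hr.1)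
    rw [mem_coe, mem_invSet]
    exact ⟨hu.inv.lt_of_index_lt hindex, by simpa using hr.2⟩
  · intro r _ r' _ h
    simp only [Prod.ext_iff, u⁻¹.injective.eq_iff] at h
    exact Prod.ext h.1 h.2

theorem isMinRep.lt_of_val_eq_succ {x : Perm (Fin m)} (hx : isMinRep μ x) {p q : Fin m}
    (hq : (q : ℕ) = p + 1) (h : μ.index p = μ.index q) : x p < x q := by
  by_contra! hle
  have hdesc : x q < x p := hle.lt_of_ne (x.injective.ne (Fin.ne_of_val_ne (by omega)))
  exact (hx _ (inYoung_swap h)).not_gt (invLen_mul_swap_lt hq hdesc)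

theorem isMinRep.strictMonoOn {x : Perm (Fin m)} (hx : isMinRep μ x) (k : Fin μ.length) :
    StrictMonoOn x {j | μ.index j = k} := by
  intro a (ha : μ.index a = k) b (hb : μ.index b = k) hab
  obtain ⟨n, hn⟩ : ∃ n, (b : ℕ) = a + n + 1 := ⟨b - a - 1, by rw [Fin.lt_def] at hab; omega⟩
  induction n generalizing b with
  | zero => exact hx.lt_of_val_eq_succ hn (ha.trans hb.symm)
  | succ n ih =>
    let c : Fin m := ⟨a + n + 1, by omega⟩
    have hc : μ.index c = k :=
      le_antisymm (hb ▸ μ.monotone_index (show (a : ℕ) + n + 1 ≤ b by omega))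
        (ha ▸ μ.monotone_index (show (a : ℕ) ≤ a + n + 1 by omega))
    exact (ih hc (show (a : ℕ) < a + n + 1 by omega) rfl).trans
      (hx.lt_of_val_eq_succ (show (b : ℕ) = a + n + 1 + 1 by omega) (hc.trans hb.symm))

theorem isMinRep_iff {x : Perm (Fin m)} :
    isMinRep μ x ↔ ∀ k, StrictMonoOn x {j | μ.index j = k} :=
  ⟨fun hx => hx.strictMonoOn, isMinRep_of_strictMonoOn⟩

theorem isMinRep_mul_blockRev_iff {σ : Perm (Fin m)} :
    isMinRep μ (σ * μ.blockRev) ↔ ∀ k, StrictAntiOn σ {j | μ.index j = k} := by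
  rw [isMinRep_iff, Perm.coe_mul]
  refine forall_congr' fun k =>
    ⟨fun h => ?_, fun h => h.comp (μ.strictAntiOn_blockRev k) (μ.mapsTo_blockRev k)⟩
  simpa [Function.comp_def, μ.blockRev_blockRev] using
    h.comp_strictAntiOn (μ.strictAntiOn_blockRev k) (μ.mapsTo_blockRev k)

end MinimalRepresentatives

section Sequences

variable {t : List ℕ}

theorem ofTypeL.getD_lt (ht : ofTypeL μ t) {p : ℕ} (hp : p < m) : t.getD p 0 < μ.length := by
  have hp' : p < t.length := ht.1 ▸ hp
  exact ht.2.1 _ (List.getD_eq_getElem _ _ hp' ▸ List.getElem_mem hp')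

theorem ofTypeL.count_take_lt (ht : ofTypeL μ t) {p : ℕ} (hp : p < m) :
    (t.take p).count (t.getD p 0) < μ.blocksFun ⟨_, ht.getD_lt hp⟩ := by
  have := List.count_take_lt_count_take (ht.1 ▸ hp) le_rfl 0
  rw [List.take_length] at this
  exact this.trans_eq (ht.2.2 ⟨_, ht.getD_lt hp⟩)

theorem ofTypeL.seqPermVal_mem (ht : ofTypeL μ t) {p : ℕ} (hp : p < m) :
    μ.sizeUpTo (t.getD p 0) ≤ seqPermVal μ t p ∧
      seqPermVal μ t p < μ.sizeUpTo (t.getD p 0 + 1) := by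
  have := ht.count_take_lt hp
  have : μ.sizeUpTo (t.getD p 0 + 1) = μ.sizeUpTo (t.getD p 0) + μ.blocksFun ⟨_, ht.getD_lt hp⟩ :=
    μ.sizeUpTo_succ' ⟨_, ht.getD_lt hp⟩
  unfold seqPermVal
  omega

theorem ofTypeL.seqPermVal_lt_seqPermVal (ht : ofTypeL μ t) {p q : ℕ} (hpq : p < q)
    (hq : q < m) (h : t.getD p 0 = t.getD q 0) : seqPermVal μ t q < seqPermVal μ t p := by
  have := List.count_take_lt_count_take hpq (ht.1 ▸ hq.le) 0
  have := ht.count_take_lt hq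
  have : μ.sizeUpTo (t.getD q 0 + 1) = μ.sizeUpTo (t.getD q 0) + μ.blocksFun ⟨_, ht.getD_lt hq⟩ :=
    μ.sizeUpTo_succ' ⟨_, ht.getD_lt hq⟩
  unfold seqPermVal
  rw [h] at *
  omega

theorem ofTypeL.index_eq_getD (ht : ofTypeL μ t) {p j : Fin m}
    (hj : (j : ℕ) = seqPermVal μ t p) : (μ.index j : ℕ) = t.getD p 0 := by
  rw [(μ.index_eq_iff (k := ⟨_, ht.getD_lt p.2⟩)).2 (hj ▸ ht.seqPermVal_mem p.2)]

theorem ofTypeL.exists_isSeqPerm (ht : ofTypeL μ t) : ∃ w, isSeqPerm μ t w := by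
  let f : Fin m → Fin m := fun p =>
    ⟨seqPermVal μ t p, (ht.seqPermVal_mem p.2).2.trans_le (μ.sizeUpTo_le _)⟩
  have hf : Function.Injective f := by
    intro p q hpq
    have hletter : t.getD p 0 = t.getD q 0 := by
      rw [← ht.index_eq_getD (j := f p) rfl, ← ht.index_eq_getD (j := f q) rfl, hpq]
    have hval : seqPermVal μ t p = seqPermVal μ t q := congrArg Fin.val hpq
    rcases lt_trichotomy p q with h | h | h
    · exact absurd hval (ht.seqPermVal_lt_seqPermVal h q.2 hletter).ne'
    · exact h
    · exact absurd hval (ht.seqPermVal_lt_seqPermVal h p.2 hletter.symm).ne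
  exact ⟨Equiv.ofBijective f hf.bijective_of_finite, fun p => rfl⟩

theorem isSeqPerm.index_apply {w : Perm (Fin m)} (hw : isSeqPerm μ t w) (ht : ofTypeL μ t)
    (p : Fin m) : (μ.index (w p) : ℕ) = t.getD p 0 :=
  ht.index_eq_getD (hw p)

theorem isSeqPerm.strictAntiOn_inv {w : Perm (Fin m)} (hw : isSeqPerm μ t w)
    (ht : ofTypeL μ t) (k : Fin μ.length) : StrictAntiOn ⇑w⁻¹ {j | μ.index j = k} := by
  intro a (ha : μ.index a = k) b (hb : μ.index b = k) hab
  have hletter : t.getD (w⁻¹ a) 0 = t.getD (w⁻¹ b) 0 := by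
    simp only [← hw.index_apply ht, Perm.coe_inv, apply_symm_apply, ha, hb]
  have hval : seqPermVal μ t (w⁻¹ a) < seqPermVal μ t (w⁻¹ b) := by
    rw [← hw, ← hw]
    simpa using hab
  by_contra! hle
  rcases hle.lt_or_eq with h | h
  · exact lt_asymm hval (ht.seqPermVal_lt_seqPermVal h (w⁻¹ b).2 hletter)
  · rw [h] at hval
    exact lt_irrefl _ hval

theorem isSeqPerm.eq_ofFn {w : Perm (Fin m)} (hw : isSeqPerm μ t w) (ht : ofTypeL μ t) :
    t = List.ofFn fun p => (μ.index (w p) : ℕ) := by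
  refine List.ext_getElem (by simp [ht.1]) fun p hp _ => ?_
  rw [List.getElem_ofFn, ← List.getD_eq_getElem _ 0 hp, hw.index_apply ht ⟨p, ht.1 ▸ hp⟩]

theorem ofTypeL_ofFn_index (w : Perm (Fin m)) :
    ofTypeL μ (List.ofFn fun p => (μ.index (w p) : ℕ)) := by
  refine ⟨List.length_ofFn, fun a ha => ?_, fun k => ?_⟩
  · obtain ⟨p, rfl⟩ := List.mem_ofFn.1 ha
    exact (μ.index (w p)).2
  · rw [List.count_ofFn, ← μ.card_filter_index_eq]
    exact card_equiv w (by simp [Fin.val_inj])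

theorem eq_of_index_apply_eq {w w' : Perm (Fin m)} (h : ∀ p, μ.index (w p) = μ.index (w' p))
    (hw : ∀ k, StrictAntiOn ⇑w⁻¹ {j | μ.index j = k})
    (hw' : ∀ k, StrictAntiOn ⇑w'⁻¹ {j | μ.index j = k}) : w = w' := by
  have hmem : ∀ j, μ.index (w' (w⁻¹ j)) = μ.index j := fun j => by
    rw [← h, Perm.coe_inv, apply_symm_apply]
  have hmono : ∀ k, StrictMonoOn (w' * w⁻¹) {j | μ.index j = k} := by
    intro k a (ha : μ.index a = k) b (hb : μ.index b = k) hab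
    refine ((hw' k).lt_iff_gt ((hmem b).trans hb) ((hmem a).trans ha)).1 ?_
    simpa using hw k ha hb hab
  exact (mul_inv_eq_one.1 (eq_one_of_inYoung_of_strictMonoOn hmem hmono)).symm

end Sequences

/-- `t ↦ w(t)` is a bijection from the set `R(μ)` of sequences of type `μ`
onto `X_{J(μ)}⁻¹ · w_{J(μ)}`: every sequence of type `μ` yields a member of that set,
and every member arises from exactly one sequence of type `μ`. -/
theorem stmt2 (m : ℕ) (μ : Composition m) (w0 : Equiv.Perm (Fin m))
    (hw0 : inYoung μ w0) (hw0max : ∀ u, inYoung μ u → invLen u ≤ invLen w0) :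
    (∀ t : List ℕ, ofTypeL μ t → ∃ x, isMinRep μ x ∧ isSeqPerm μ t (w0 * x⁻¹)) ∧
    (∀ x, isMinRep μ x → ∃! t : List ℕ, ofTypeL μ t ∧ isSeqPerm μ t (w0 * x⁻¹)) := by
  obtain rfl := eq_blockRev_of_inYoung_of_forall_invLen_le hw0 hw0max
  refine ⟨fun t ht => ?_, fun x hx => ?_⟩
  · obtain ⟨w, hw⟩ := ht.exists_isSeqPerm
    refine ⟨w⁻¹ * μ.blockRev, isMinRep_mul_blockRev_iff.2 (hw.strictAntiOn_inv ht), ?_⟩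
    rwa [mul_inv_rev, inv_inv, μ.blockRev_inv, ← mul_assoc, μ.blockRev_mul_self, one_mul]
  · set w := μ.blockRev * x⁻¹
    have hw_anti : ∀ k, StrictAntiOn ⇑w⁻¹ {j | μ.index j = k} := by
      rwa [← isMinRep_mul_blockRev_iff, mul_inv_rev, inv_inv, μ.blockRev_inv, mul_assoc,
        μ.blockRev_mul_self, mul_one]
    have ht := ofTypeL_ofFn_index (μ := μ) w
    obtain ⟨w', hw'⟩ := ht.exists_isSeqPerm
    have hw'w : w' = w := eq_of_index_apply_eq
      (fun p => Fin.ext ((hw'.index_apply ht p).trans (by simp))) (hw'.strictAntiOn_inv ht) hw_anti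
    exact ⟨_, ⟨ht, hw'w ▸ hw'⟩, fun t' ht' => ht'.2.eq_ofFn ht'.1⟩
end

section
/- For a sequence t of type μ, define the sharp partition μ^♯(t) = (μ^♯_1, μ^♯_2, ...) where μ^♯_i is the number of good i's in t. Then μ^♯(t) is a partition, i.e. μ^♯_{i+1} ≤ μ^♯_i for all i, and moreover μ^♯_i ≤ μ_i for all i. -/
/- Symbols are 0-based: the paper's symbol `i ∈ {1, …, r}` is `i - 1` here, and
`μ_i` is `μ.blocks.getD (i-1) 0`.  Good/bad terms of a word are as in the paper:
all 0's are good, and an `a > 0` is good iff the number of previous good `(a-1)`'s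
strictly exceeds the number of previous good `a`'s. -/

def goodStep (g : ℕ → ℕ) (a : ℕ) : ℕ → ℕ :=
  if a = 0 ∨ g a < g (a - 1) then Function.update g a (g a + 1) else g

/-- `goodCounts t s` = the number of good occurrences of the symbol `s` in `t`;
this is the part `μ♯_s(t)` of the sharp partition of `t`. -/
def goodCounts (t : List ℕ) : ℕ → ℕ :=
  t.foldl goodStep (fun _ => 0)

/-! Reading a letter `a` raises the good count of `a` by one exactly when this keeps the
counts antitone, so `μ♯(t)` stays a partition; and only occurrences of `i` can raise
`μ♯_i(t)`, so it is at most the number `μ_i` of `i`'s in `t`. -/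

lemma goodStep_antitone {g : ℕ → ℕ} (hg : Antitone g) (a : ℕ) : Antitone (goodStep g a) := by
  refine antitone_nat_of_succ_le fun i => ?_
  unfold goodStep
  split_ifs with hgood
  · rcases eq_or_ne (i + 1) a with rfl | hi
    · have hlt : g (i + 1) < g i := by simpa using hgood
      rw [Function.update_self, Function.update_of_ne (by omega)]
      exact hlt
    · rw [Function.update_of_ne hi]
      refine (hg i.le_succ).trans ?_
      rcases eq_or_ne i a with rfl | hia
      · simp
      · rw [Function.update_of_ne hia]
  · exact hg i.le_succ

lemma antitone_foldl_goodStep (t : List ℕ) {g : ℕ → ℕ} (hg : Antitone g) :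
    Antitone (t.foldl goodStep g) := by
  induction t generalizing g with
  | nil => exact hg
  | cons a t ih => exact ih (goodStep_antitone hg a)

lemma goodCounts_antitone (t : List ℕ) : Antitone (goodCounts t) :=
  antitone_foldl_goodStep t antitone_const

lemma goodStep_le (g : ℕ → ℕ) (a i : ℕ) : goodStep g a i ≤ g i + if a = i then 1 else 0 := by
  unfold goodStep
  split_ifs <;> simp_all [eq_comm]

lemma foldl_goodStep_le (t : List ℕ) (g : ℕ → ℕ) (i : ℕ) :
    t.foldl goodStep g i ≤ g i + t.count i := by
  induction t generalizing g with
  | nil => simp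
  | cons a t ih =>
    have := (ih (goodStep g a)).trans (Nat.add_le_add_right (goodStep_le g a i) _)
    simp only [List.foldl_cons, List.count_cons, beq_iff_eq]
    omega

lemma goodCounts_le_count (t : List ℕ) (i : ℕ) : goodCounts t i ≤ t.count i :=
  (foldl_goodStep_le t _ i).trans_eq (zero_add _)

lemma ofTypeL.count_eq_getD {m : ℕ} {μ : Composition m} {t : List ℕ} (ht : ofTypeL μ t)
    (i : ℕ) : t.count i = μ.blocks.getD i 0 := by
  obtain ⟨-, hlt, hcount⟩ := ht
  by_cases hi : i < μ.length
  · rw [hcount ⟨i, hi⟩, List.getD_eq_getElem]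
    rfl
  · rw [List.count_eq_zero.2 fun hmem => hi (hlt i hmem), List.getD_eq_default]
    simpa using hi

/-- the sharp sequence `μ♯(t)` of a sequence `t` of type `μ` is a
partition, with `μ♯_{i+1}(t) ≤ μ♯_i(t)` and `μ♯_i(t) ≤ μ_i` for all `i`. -/
theorem stmt6 (m : ℕ) (μ : Composition m) (t : List ℕ) (ht : ofTypeL μ t) :
    ∀ i : ℕ, goodCounts t (i + 1) ≤ goodCounts t i ∧ goodCounts t i ≤ μ.blocks.getD i 0 :=
  fun i => ⟨goodCounts_antitone t i.le_succ, (goodCounts_le_count t i).trans (ht.count_eq_getD i).le⟩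
end

section
/- Let w ∈ S_m and let P(w), Q(w) denote the insertion and recording tableaux under the Robinson–Schensted correspondence. Then Q(w) = P(w^{-1}). -/
/- Robinson–Schensted, implemented directly.  Tableaux are lists of rows of natural
numbers; entries and positions are 0-based, so the recording tableau records steps
`0, 1, …, m-1` (the paper's labels `1, …, m` shifted by one, matching the 0-based
values of the permutations). -/

/-- Insert `a` into a row: replace the leftmost entry strictly greater than `a`
(bumping it out), or append `a` at the end. -/
def rowInsert (row : List ℕ) (a : ℕ) : List ℕ × Option ℕ :=
  match row.findIdx? (fun b => decide (a < b)) with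
  | none => (row ++ [a], none)
  | some i => (row.set i a, some (row.getD i 0))

/-- Schensted row-insertion of `a` into a tableau. -/
def insertRows : List (List ℕ) → ℕ → List (List ℕ)
  | [], a => [[a]]
  | r :: rest, a =>
    match rowInsert r a with
    | (r', none) => r' :: rest
    | (r', some b) => r' :: insertRows rest b

/-- Grow the recording tableau `Q` by the label `lab` at the unique cell where the
shape of the new insertion tableau `P'` exceeds the shape of `Q`. -/
def recordGrow : List (List ℕ) → List (List ℕ) → ℕ → List (List ℕ)
  | [], _, lab => [[lab]]
  | q :: Qs, [], lab => (q ++ [lab]) :: Qs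
  | q :: Qs, p :: Ps, lab =>
    if q.length < p.length then (q ++ [lab]) :: Qs else q :: recordGrow Qs Ps lab

/-- The Robinson–Schensted pair `(P(w), Q(w))` of a word `w`. -/
def RS (w : List ℕ) : List (List ℕ) × List (List ℕ) :=
  let st := w.foldl
    (fun (st : List (List ℕ) × List (List ℕ) × ℕ) a =>
      let P' := insertRows st.1 a
      (P', recordGrow st.2.1 P' st.2.2, st.2.2 + 1))
    ([], [], 0)
  (st.1, st.2.1)

namespace RSproof
open List

abbrev Pt := ℕ × ℕ

def tr (p : Pt) : Pt := (p.2, p.1)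

/-- generalized RS on a biword: insert second coordinates, record first. -/
def RSg (A : List Pt) : List (List ℕ) × List (List ℕ) :=
  A.foldl (fun PQ p =>
    (insertRows PQ.1 p.2, recordGrow PQ.2 (insertRows PQ.1 p.2) p.1)) ([], [])

/-- single-row machine: state (row, labels, bumped pairs) -/
def step1 (s : List ℕ × List ℕ × List Pt) (p : Pt) : List ℕ × List ℕ × List Pt :=
  match rowInsert s.1 p.2 with
  | (r', none) => (r', s.2.1 ++ [p.1], s.2.2)
  | (r', some b) => (r', s.2.1, s.2.2 ++ [(p.1, b)])

def F (A : List Pt) : List ℕ × List ℕ × List Pt := A.foldl step1 ([], [], [])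

def sortF (l : List Pt) : List Pt := l.insertionSort (fun a b => a.1 ≤ b.1)

def tpose (A : List Pt) : List Pt := sortF (A.map tr)

def BW (A : List Pt) : Prop :=
  A.Pairwise (fun p q => p.1 < q.1) ∧ (A.map Prod.snd).Nodup

def lastSnd (ρ : List Pt) : ℕ := ((ρ.getLast?).map Prod.snd).getD 0
def headFst (ρ : List Pt) : ℕ := ((ρ.head?).map Prod.fst).getD 0
def trRow (ρ : List Pt) : List Pt := ρ.reverse.map tr

def rowPairs (ρ : List Pt) : List Pt := (ρ.zip ρ.tail).map (fun ab => (ab.2.1, ab.1.2))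
def bumpMS (rows : List (List Pt)) : List Pt := (rows.map rowPairs).flatten

def row (rows : List (List Pt)) (j : ℕ) : List Pt := (rows[j]?).getD []

structure Valid (A : List Pt) (rows : List (List Pt)) : Prop where
  ne : ∀ ρ ∈ rows, ρ ≠ []
  perm : rows.flatten ~ A
  incr : ∀ ρ ∈ rows, ρ.Pairwise (fun a b => a.1 < b.1 ∧ b.2 < a.2)
  cover : ∀ j, ∀ b ∈ row rows (j+1), ∃ a ∈ row rows j, a.1 < b.1 ∧ a.2 < b.2

end RSproof

namespace RSproof
open List

instance : IsAntisymm Pt (fun p q : Pt => p.1 < q.1) :=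
  ⟨fun a b h h' => absurd (h.trans h') (lt_irrefl _)⟩

theorem sortedFst_unique {l₁ l₂ : List Pt} (hp : l₁ ~ l₂)
    (h₁ : l₁.Pairwise (fun p q : Pt => p.1 < q.1))
    (h₂ : l₂.Pairwise (fun p q : Pt => p.1 < q.1)) : l₁ = l₂ :=
  hp.eq_of_pairwise (fun _ _ _ _ h h' => absurd (h.trans h') (lt_irrefl _)) h₁ h₂

theorem pairwise_lt_of_le_nodup {l : List Pt}
    (h : l.Pairwise (fun p q : Pt => p.1 ≤ q.1)) (hn : (l.map Prod.fst).Nodup) :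
    l.Pairwise (fun p q : Pt => p.1 < q.1) := by
  have hn' : l.Pairwise (fun p q : Pt => p.1 ≠ q.1) := List.pairwise_map.mp hn
  exact (h.and hn').imp (fun h => lt_of_le_of_ne h.1 h.2)

theorem sortF_perm (l : List Pt) : sortF l ~ l := perm_insertionSort _ l

theorem sortF_sorted (l : List Pt) (hn : (l.map Prod.fst).Nodup) :
    (sortF l).Pairwise (fun p q : Pt => p.1 < q.1) := by
  have htot : IsTotal Pt (fun a b : Pt => a.1 ≤ b.1) := ⟨fun a b => le_total _ _⟩
  have htr : IsTrans Pt (fun a b : Pt => a.1 ≤ b.1) := ⟨fun a b c => le_trans⟩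
  refine pairwise_lt_of_le_nodup (by
    haveI : Std.Total (fun a b : Pt => a.1 ≤ b.1) := ⟨fun a b => le_total _ _⟩
    exact pairwise_insertionSort _ l) ?_
  have : (sortF l).map Prod.fst ~ l.map Prod.fst := (sortF_perm l).map _
  exact this.nodup_iff.mpr hn

theorem F_append (A : List Pt) (p : Pt) : F (A ++ [p]) = step1 (F A) p := by
  simp [F, List.foldl_append]

theorem RSg_append (A : List Pt) (p : Pt) :
    RSg (A ++ [p]) = (insertRows (RSg A).1 p.2,
      recordGrow (RSg A).2 (insertRows (RSg A).1 p.2) p.1) := by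
  simp [RSg, List.foldl_append]

theorem decomp (A : List Pt) (hA : A ≠ []) :
    RSg A = ((F A).1 :: (RSg (F A).2.2).1, (F A).2.1 :: (RSg (F A).2.2).2)
    ∧ (F A).2.1.length = (F A).1.length ∧ (F A).1 ≠ [] := by
  induction A using List.reverseRecOn with
  | nil => exact absurd rfl hA
  | append_singleton A p IH =>
    rcases eq_or_ne A [] with rfl | hA'
    · simp only [List.nil_append]
      have h1 : F [p] = ([p.2], [p.1], []) := by
        simp [F, step1, rowInsert]
      have h2 : RSg [p] = ([[p.2]], [[p.1]]) := by
        simp [RSg, insertRows, rowInsert, recordGrow]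
      rw [h1, h2]
      simp [RSg]
    · obtain ⟨hRS, hlen, hne⟩ := IH hA'
      rw [F_append, RSg_append, hRS]
      rcases hfi : (F A).1.findIdx? (fun b => decide (p.2 < b)) with _ | i
      · have hrow : rowInsert (F A).1 p.2 = ((F A).1 ++ [p.2], none) := by
          simp [rowInsert, hfi]
        have hins : insertRows ((F A).1 :: (RSg (F A).2.2).1) p.2
            = ((F A).1 ++ [p.2]) :: (RSg (F A).2.2).1 := by
          simp [insertRows, hrow]
        have hst : step1 (F A) p = ((F A).1 ++ [p.2], (F A).2.1 ++ [p.1], (F A).2.2) := by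
          simp [step1, hrow]
        rw [hst, hins]
        have hrec : recordGrow ((F A).2.1 :: (RSg (F A).2.2).2)
            (((F A).1 ++ [p.2]) :: (RSg (F A).2.2).1) p.1
            = ((F A).2.1 ++ [p.1]) :: (RSg (F A).2.2).2 := by
          simp [recordGrow, hlen]
        rw [hrec]
        exact ⟨rfl, by simp [hlen], by simp⟩
      · have hrow : rowInsert (F A).1 p.2 = ((F A).1.set i p.2, some ((F A).1.getD i 0)) := by
          simp [rowInsert, hfi]
        set b := (F A).1.getD i 0 with hb
        have hins : insertRows ((F A).1 :: (RSg (F A).2.2).1) p.2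
            = ((F A).1.set i p.2) :: insertRows (RSg (F A).2.2).1 b := by
          simp [insertRows, hrow]
        have hst : step1 (F A) p = ((F A).1.set i p.2, (F A).2.1, (F A).2.2 ++ [(p.1, b)]) := by
          simp [step1, hrow]
        rw [hst, hins]
        have hrec : recordGrow ((F A).2.1 :: (RSg (F A).2.2).2)
            (((F A).1.set i p.2) :: insertRows (RSg (F A).2.2).1 b) p.1
            = (F A).2.1 :: recordGrow (RSg (F A).2.2).2 (insertRows (RSg (F A).2.2).1 b) p.1 := by
          simp [recordGrow, hlen]
        rw [hrec, RSg_append]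
        refine ⟨rfl, by simp [hlen], by simpa using hne⟩

end RSproof

namespace RSproof
open List

theorem set_getElem_self' {α : Type*} (l : List α) (n : ℕ) (a : α) (h : l[n]? = some a) :
    l.set n a = l := by
  apply List.ext_getElem?
  intro j
  rcases eq_or_ne n j with rfl | hj
  · have hn : n < l.length := by
      by_contra hc
      rw [List.getElem?_eq_none (le_of_not_gt hc)] at h; simp at h
    rw [List.getElem?_set_self hn, h]
  · rw [List.getElem?_set_ne hj]

theorem row_lt_length {rows : List (List Pt)} {j : ℕ} {p : Pt} (h : p ∈ row rows j) :
    j < rows.length := by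
  by_contra hc
  rw [row, List.getElem?_eq_none (le_of_not_gt hc)] at h
  simp at h

theorem row_eq {rows : List (List Pt)} {j : ℕ} (h : j < rows.length) :
    row rows j = rows[j] := by
  rw [row, List.getElem?_eq_getElem h]; rfl

theorem mem_flatten_of_mem_row {rows : List (List Pt)} {j : ℕ} {p : Pt}
    (h : p ∈ row rows j) : p ∈ rows.flatten := by
  have hl := row_lt_length h
  rw [row_eq hl] at h
  exact List.mem_flatten.mpr ⟨rows[j], List.getElem_mem hl, h⟩

theorem exists_row_of_mem_flatten {rows : List (List Pt)} {p : Pt}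
    (h : p ∈ rows.flatten) : ∃ j, p ∈ row rows j := by
  obtain ⟨l, hl, hp⟩ := List.mem_flatten.mp h
  obtain ⟨j, hj, rfl⟩ := List.mem_iff_getElem.mp hl
  exact ⟨j, (row_eq hj) ▸ hp⟩

theorem same_row {ρ : List Pt} (hpw : ρ.Pairwise (fun a b => a.1 < b.1 ∧ b.2 < a.2))
    {a b : Pt} (ha : a ∈ ρ) (hb : b ∈ ρ) (h : a.1 < b.1) : b.2 < a.2 := by
  have hsym : Symmetric (fun a b : Pt => (a.1 < b.1 ∧ b.2 < a.2) ∨ (b.1 < a.1 ∧ a.2 < b.2)) :=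
    fun x y h => h.symm
  have hpw' : ρ.Pairwise (fun a b : Pt => (a.1 < b.1 ∧ b.2 < a.2) ∨ (b.1 < a.1 ∧ a.2 < b.2)) :=
    hpw.imp (fun h => Or.inl h)
  haveI : Std.Symm (fun a b : Pt => (a.1 < b.1 ∧ b.2 < a.2) ∨ (b.1 < a.1 ∧ a.2 < b.2)) :=
    ⟨fun a b h => hsym h⟩
  have := hpw'.forall ha hb (by intro he; subst he; exact lt_irrefl _ h)
  rcases this with ⟨_, h2⟩ | ⟨h1, _⟩
  · exact h2
  · exact absurd (h.trans h1) (lt_irrefl _)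

theorem noLt2 {A rows} (v : Valid A rows) :
    ∀ j k, k ≤ j → ∀ a ∈ row rows j, ∀ b ∈ row rows k, ¬(a.1 < b.1 ∧ a.2 < b.2) := by
  intro j
  induction j with
  | zero =>
    intro k hk a ha b hb ⟨h1, h2⟩
    interval_cases k
    have hj := row_lt_length ha
    exact absurd h2 (not_lt_of_gt (same_row (v.incr _ (row_eq hj ▸ List.getElem_mem hj))
      (row_eq hj ▸ ha) (row_eq hj ▸ hb) h1))
  | succ j' IH =>
    intro k hk a ha b hb ⟨h1, h2⟩
    rcases eq_or_lt_of_le hk with rfl | hklt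
    · have hj := row_lt_length ha
      exact absurd h2 (not_lt_of_gt (same_row (v.incr _ (row_eq hj ▸ List.getElem_mem hj))
        (row_eq hj ▸ ha) (row_eq hj ▸ hb) h1))
    · obtain ⟨a', ha', h1', h2'⟩ := v.cover j' a ha
      exact IH k (Nat.lt_succ_iff.mp hklt) a' ha' b hb ⟨h1'.trans h1, h2'.trans h2⟩

theorem level_le {A rows rows'} (v : Valid A rows) (v' : Valid A rows') :
    ∀ j p, p ∈ row rows j → ∀ k, p ∈ row rows' k → j ≤ k := by
  intro j
  induction j with
  | zero => exact fun p _ k _ => Nat.zero_le k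
  | succ j' IH =>
    intro p hp k hk
    obtain ⟨a, ha, h1, h2⟩ := v.cover j' p hp
    have haA : a ∈ A := v.perm.subset (mem_flatten_of_mem_row ha)
    obtain ⟨k', hk'⟩ := exists_row_of_mem_flatten (v'.perm.symm.subset haA)
    have hj' : j' ≤ k' := IH a ha k' hk'
    by_contra hc
    exact noLt2 v' k' k (by omega) a hk' p hk ⟨h1, h2⟩

theorem valid_unique {A rows rows'} (hN : A.Nodup) (v : Valid A rows) (v' : Valid A rows') :
    rows = rows' := by
  have hmem : ∀ j p, p ∈ row rows j ↔ p ∈ row rows' j := by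
    intro j p
    constructor
    · intro h
      obtain ⟨k, hk⟩ := exists_row_of_mem_flatten
        (v'.perm.symm.subset (v.perm.subset (mem_flatten_of_mem_row h)))
      have := le_antisymm (level_le v v' j p h k hk) (level_le v' v k p hk j h)
      exact this ▸ hk
    · intro h
      obtain ⟨k, hk⟩ := exists_row_of_mem_flatten
        (v.perm.symm.subset (v'.perm.subset (mem_flatten_of_mem_row h)))
      have := le_antisymm (level_le v' v j p h k hk) (level_le v v' k p hk j h)
      exact this ▸ hk
  have hlt : ∀ j, j < rows.length ↔ j < rows'.length := by
    intro j
    constructor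
    · intro h
      obtain ⟨p, hp⟩ := List.exists_mem_of_ne_nil _ (v.ne rows[j] (List.getElem_mem h))
      exact row_lt_length ((hmem j p).mp (row_eq h ▸ hp))
    · intro h
      obtain ⟨p, hp⟩ := List.exists_mem_of_ne_nil _ (v'.ne rows'[j] (List.getElem_mem h))
      exact row_lt_length ((hmem j p).mpr (row_eq h ▸ hp))
  have hlen : rows.length = rows'.length := by
    rcases Nat.lt_or_ge rows.length rows'.length with h | h
    · exact absurd ((hlt rows.length).mpr h) (lt_irrefl _)
    rcases Nat.lt_or_ge rows'.length rows.length with h2 | h2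
    · exact absurd ((hlt rows'.length).mp h2) (lt_irrefl _)
    omega
  have hnodup : rows.flatten.Nodup := v.perm.nodup_iff.mpr hN
  have hnodup' : rows'.flatten.Nodup := v'.perm.nodup_iff.mpr hN
  apply List.ext_getElem hlen
  intro j hj hj'
  have hrownd : rows[j].Nodup := ((List.nodup_flatten.mp hnodup).1) _ (List.getElem_mem hj)
  have hrownd' : rows'[j].Nodup := ((List.nodup_flatten.mp hnodup').1) _ (List.getElem_mem hj')
  apply sortedFst_unique
  · exact (List.perm_ext_iff_of_nodup hrownd hrownd').mpr
      (fun p => by rw [← row_eq hj, ← row_eq hj']; exact hmem j p)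
  · exact (v.incr _ (List.getElem_mem hj)).imp (fun h => h.1)
  · exact (v'.incr _ (List.getElem_mem hj')).imp (fun h => h.1)

end RSproof

namespace RSproof
open List

theorem row_set_ne {rows : List (List Pt)} {i j : ℕ} (h : i ≠ j) (ρ' : List Pt) :
    row (rows.set i ρ') j = row rows j := by
  rw [row, List.getElem?_set_ne h, row]

theorem row_set_self {rows : List (List Pt)} {i : ℕ} (h : i < rows.length) (ρ' : List Pt) :
    row (rows.set i ρ') i = ρ' := by
  rw [row, List.getElem?_set_self h]; rfl

theorem row_append_lt {rows : List (List Pt)} {j : ℕ} (h : j < rows.length) (ρ : List Pt) :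
    row (rows ++ [ρ]) j = row rows j := by
  rw [row, List.getElem?_append_left h, row]

theorem row_append_len (rows : List (List Pt)) (ρ : List Pt) :
    row (rows ++ [ρ]) rows.length = ρ := by
  rw [row, List.getElem?_concat_length]; rfl

theorem lastSnd_concat (ρ : List Pt) (x : Pt) : lastSnd (ρ ++ [x]) = x.2 := by
  simp [lastSnd, List.getLast?_concat]

theorem headFst_concat {ρ : List Pt} (h : ρ ≠ []) (x : Pt) : headFst (ρ ++ [x]) = headFst ρ := by
  rcases ρ with _ | ⟨a, ρ⟩
  · exact absurd rfl h
  · simp [headFst]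

theorem lastSnd_eq_getLast {ρ : List Pt} (h : ρ ≠ []) : lastSnd ρ = (ρ.getLast h).2 := by
  simp [lastSnd, List.getLast?_eq_getLast h]

theorem headFst_eq_head {ρ : List Pt} (h : ρ ≠ []) : headFst ρ = (ρ.head h).1 := by
  simp [headFst, List.head?_eq_head h]

theorem rowPairs_cons {ρ : List Pt} (h : ρ ≠ []) (a : Pt) :
    rowPairs (a :: ρ) = ((ρ.head h).1, a.2) :: rowPairs ρ := by
  rcases ρ with _ | ⟨b, ρ⟩; · exact absurd rfl h
  · rfl

theorem rowPairs_concat {ρ : List Pt} (h : ρ ≠ []) (x : Pt) :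
    rowPairs (ρ ++ [x]) = rowPairs ρ ++ [(x.1, (ρ.getLast h).2)] := by
  induction ρ with
  | nil => exact absurd rfl h
  | cons a ρ IH =>
    rcases eq_or_ne ρ [] with rfl | hρ
    · rfl
    · have h1 : (a :: ρ) ++ [x] = a :: (ρ ++ [x]) := rfl
      rw [h1, rowPairs_cons (by simp [hρ]) a, IH hρ, rowPairs_cons hρ a]
      have hh : (ρ ++ [x]).head (by simp [hρ]) = ρ.head hρ := List.head_append_of_ne_nil _
      have hg : (ρ).getLast hρ = (a :: ρ).getLast (by simp) := (List.getLast_cons hρ).symm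
      rw [hh, hg]
      rfl

theorem flatten_set_concat_perm {α : Type*} (L : List (List α)) (i : ℕ) (h : i < L.length)
    (l : List α) : (L.set i (L[i] ++ l)).flatten ~ L.flatten ++ l := by
  have hL : L = L.take i ++ L[i] :: L.drop (i + 1) := by
    conv_lhs => rw [← set_getElem_self' L i L[i] (List.getElem?_eq_getElem h)]
    rw [List.set_eq_take_append_cons_drop, if_pos h]
  have hset : L.set i (L[i] ++ l) = L.take i ++ (L[i] ++ l) :: L.drop (i + 1) := by
    rw [List.set_eq_take_append_cons_drop, if_pos h]
  rw [hset]
  conv_rhs => rw [hL]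
  simp only [List.flatten_append, List.flatten_cons]
  rw [← Multiset.coe_eq_coe]
  simp only [← Multiset.coe_add, ← List.append_assoc]
  ring_nf
  rw [add_right_comm]

end RSproof

namespace RSproof
open List

theorem rowPairs_map_fst : ∀ ρ : List Pt, (rowPairs ρ).map Prod.fst = ρ.tail.map Prod.fst := by
  intro ρ
  induction ρ with
  | nil => rfl
  | cons a ρ IH =>
    rcases eq_or_ne ρ [] with rfl | hρ
    · rfl
    · rw [rowPairs_cons hρ a]
      simp only [List.map_cons, IH, List.tail_cons]
      conv_rhs => rw [← List.cons_head_tail hρ]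
      rfl

theorem rowPairs_map_snd : ∀ ρ : List Pt, (rowPairs ρ).map Prod.snd = ρ.dropLast.map Prod.snd := by
  intro ρ
  induction ρ with
  | nil => rfl
  | cons a ρ IH =>
    rcases eq_or_ne ρ [] with rfl | hρ
    · rfl
    · rw [rowPairs_cons hρ a, List.dropLast_cons_of_ne_nil hρ]
      simp only [List.map_cons, IH]

theorem flatten_map_sublist {α β : Type*} (f g : List α → List β) (L : List (List α))
    (h : ∀ ρ ∈ L, f ρ <+ g ρ) : (L.map f).flatten <+ (L.map g).flatten := by
  induction L with
  | nil => exact List.Sublist.refl _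
  | cons ρ L IH =>
    simp only [List.map_cons, List.flatten_cons]
    exact (h ρ List.mem_cons_self).append (IH (fun ρ' h' => h ρ' (List.mem_cons_of_mem _ h')))

theorem bump_fst_sub (rows : List (List Pt)) :
    (bumpMS rows).map Prod.fst <+ rows.flatten.map Prod.fst := by
  rw [bumpMS, List.map_flatten, List.map_flatten, List.map_map]
  exact flatten_map_sublist _ _ rows (fun ρ _ => by
    simp only [Function.comp_apply]
    rw [rowPairs_map_fst]
    exact (List.tail_sublist ρ).map _)

theorem bump_snd_sub (rows : List (List Pt)) :
    (bumpMS rows).map Prod.snd <+ rows.flatten.map Prod.snd := by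
  rw [bumpMS, List.map_flatten, List.map_flatten, List.map_map]
  exact flatten_map_sublist _ _ rows (fun ρ _ => by
    simp only [Function.comp_apply]
    rw [rowPairs_map_snd]
    exact (List.dropLast_sublist ρ).map _)

theorem lastSnd_le_of_mem {ρ : List Pt} (hne : ρ ≠ [])
    (hpw : ρ.Pairwise (fun a b => a.1 < b.1 ∧ b.2 < a.2)) {a : Pt} (ha : a ∈ ρ) :
    lastSnd ρ ≤ a.2 := by
  rw [lastSnd_eq_getLast hne]
  conv at ha => rw [← List.dropLast_append_getLast hne]
  conv at hpw => rw [← List.dropLast_append_getLast hne]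
  rcases List.mem_append.mp ha with h | h
  · exact le_of_lt ((List.pairwise_append.mp hpw).2.2 a h _ (List.mem_singleton_self _)).2
  · rw [List.mem_singleton.mp h]

end RSproof

namespace RSproof
open List

theorem invariant : ∀ (A : List Pt), BW A → ∃ rows, Valid A rows ∧
    (F A).1 = rows.map lastSnd ∧ (F A).2.1 = rows.map headFst ∧
    (F A).2.2.Pairwise (fun p q : Pt => p.1 < q.1) ∧ (F A).2.2 ~ bumpMS rows := by
  intro A
  induction A using List.reverseRecOn with
  | nil =>
    intro _
    refine ⟨[], ⟨by simp, by simp, by simp, ?_⟩, by simp [F], by simp [F], by simp [F],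
      by simp [F, bumpMS]⟩
    intro j b hb
    simp [row] at hb
  | append_singleton A x IH =>
    intro hBW
    have hpwA : A.Pairwise (fun p q : Pt => p.1 < q.1) := (List.pairwise_append.mp hBW.1).1
    have hfstlt : ∀ p ∈ A, p.1 < x.1 := fun p hp =>
      (List.pairwise_append.mp hBW.1).2.2 p hp x (List.mem_singleton_self _)
    have hsnd : (A.map Prod.snd).Nodup ∧ ∀ p ∈ A, p.2 ≠ x.2 := by
      have := hBW.2
      rw [List.map_append] at this
      rcases List.nodup_append'.mp this with ⟨h1, _, h3⟩
      exact ⟨h1, fun p hp he => h3 (List.mem_map_of_mem hp) (by simp [he])⟩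
    obtain ⟨rows, v, hr, hq, hBs, hBp⟩ := IH ⟨hpwA, hsnd.1⟩
    have hmemA : ∀ {j : ℕ} {p : Pt}, p ∈ row rows j → p ∈ A := fun h =>
      v.perm.subset (mem_flatten_of_mem_row h)
    have hrlen : (F A).1.length = rows.length := by rw [hr, List.length_map]
    have hlastmem : ∀ {j : ℕ} (h : j < rows.length),
        (rows[j]'h).getLast (v.ne _ (List.getElem_mem h)) ∈ row rows j := by
      intro j h
      rw [row_eq h]
      exact List.getLast_mem _
    rw [F_append]
    rcases hfi : ((F A).1).findIdx? (fun b => decide (x.2 < b)) with _ | i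
    · -- appended at the end: new singleton row
      have hrow : rowInsert (F A).1 x.2 = ((F A).1 ++ [x.2], none) := by
        simp [rowInsert, hfi]
      have hst : step1 (F A) x = ((F A).1 ++ [x.2], (F A).2.1 ++ [x.1], (F A).2.2) := by
        simp [step1, hrow]
      have hnone : ∀ y ∈ (F A).1, ¬ (x.2 < y) := by
        intro y hy
        have := List.findIdx?_eq_none_iff.mp hfi y hy
        simpa using this
      have hlt : ∀ {j : ℕ} (hj : j < rows.length), lastSnd (rows[j]'hj) < x.2 := by
        intro j hj
        have hmem : lastSnd (rows[j]'hj) ∈ (F A).1 := by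
          rw [hr]
          exact List.mem_map_of_mem (List.getElem_mem hj)
        have h1 := hnone _ hmem
        have h2 : lastSnd (rows[j]'hj) ≠ x.2 := by
          rw [lastSnd_eq_getLast (v.ne _ (List.getElem_mem hj))]
          exact hsnd.2 _ (hmemA (hlastmem hj))
        omega
      refine ⟨rows ++ [[x]], ⟨?_, ?_, ?_, ?_⟩, ?_, ?_, ?_, ?_⟩
      · intro ρ hρ
        rcases List.mem_append.mp hρ with h | h
        · exact v.ne ρ h
        · rw [List.mem_singleton.mp h]; simp
      · rw [List.flatten_append]
        simpa using v.perm.append_right [x]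
      · intro ρ hρ
        rcases List.mem_append.mp hρ with h | h
        · exact v.incr ρ h
        · rw [List.mem_singleton.mp h]; exact List.pairwise_singleton _ _
      · intro j b hb
        rcases lt_trichotomy (j+1) rows.length with h | h | h
        · rw [row_append_lt h] at hb
          obtain ⟨a, ha, h1, h2⟩ := v.cover j b hb
          exact ⟨a, by rw [row_append_lt (by omega)]; exact ha, h1, h2⟩
        · rw [h, row_append_len] at hb
          have hbx : b = x := List.mem_singleton.mp hb
          subst hbx
          have hj : j < rows.length := by omega
          refine ⟨rows[j].getLast (v.ne _ (List.getElem_mem hj)), ?_, ?_, ?_⟩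
          · rw [row_append_lt hj]
            exact hlastmem hj
          · exact hfstlt _ (hmemA (hlastmem hj))
          · have := hlt hj
            rwa [lastSnd_eq_getLast (v.ne _ (List.getElem_mem hj))] at this
        · exfalso
          have := row_lt_length hb
          rw [List.length_append, List.length_singleton] at this
          omega
      · rw [hst, hr, List.map_append]
        simp [lastSnd]
      · rw [hst, hq, List.map_append]
        simp [headFst]
      · rw [hst]; exact hBs
      · rw [hst]
        have : bumpMS (rows ++ [[x]]) = bumpMS rows := by
          simp [bumpMS, List.map_append, List.flatten_append, rowPairs]
        rw [this]; exact hBp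
    · -- bumping case
      obtain ⟨hilen, hidx⟩ := List.findIdx?_eq_some_iff_findIdx_eq.mp hfi
      have hilen' : i < rows.length := by rwa [hrlen] at hilen
      have hρne : rows[i] ≠ [] := v.ne _ (List.getElem_mem hilen')
      have hri : (F A).1[i]'(hilen) = lastSnd (rows[i]'hilen') := by
        have h1 : (F A).1[i]? = some ((F A).1[i]'hilen) := List.getElem?_eq_getElem hilen
        conv at h1 => lhs; rw [hr]
        rw [List.getElem?_map, List.getElem?_eq_getElem hilen'] at h1
        simpa using h1.symm
      have hxlt : x.2 < lastSnd (rows[i]'hilen') := by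
        have h0 : (F A).1.findIdx (fun b => decide (x.2 < b)) < (F A).1.length := by
          rw [hidx]; exact hilen
        have := List.findIdx_getElem (w := h0)
        simp only [hidx] at this
        rw [hri] at this
        simpa using this
      have hrow : rowInsert (F A).1 x.2 = ((F A).1.set i x.2, some ((F A).1.getD i 0)) := by
        simp [rowInsert, hfi]
      have hbval : (F A).1.getD i 0 = lastSnd (rows[i]'hilen') := by
        rw [List.getD_eq_getElem _ _ hilen]; exact hri
      have hst : step1 (F A) x
          = ((F A).1.set i x.2, (F A).2.1, (F A).2.2 ++ [(x.1, lastSnd (rows[i]'hilen'))]) := by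
        rw [show (x.1, lastSnd (rows[i]'hilen')) = (x.1, (F A).1.getD i 0) by rw [hbval]]
        simp [step1, hrow]
      have hjlt : ∀ {j : ℕ} (hj : j < i), lastSnd (rows[j]'(lt_trans hj hilen')) < x.2 := by
        intro j hj
        have hjr : j < rows.length := lt_trans hj hilen'
        have hjl : j < (F A).1.length := by omega
        have h0 : ¬ (x.2 < (F A).1[j]'hjl) := by
          have := List.not_of_lt_findIdx (p := fun b => decide (x.2 < b)) (xs := (F A).1)
            (hidx ▸ hj)
          simpa using this
        have hrj : (F A).1[j]'hjl = lastSnd (rows[j]'hjr) := by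
          have h1 : (F A).1[j]? = some ((F A).1[j]'hjl) := List.getElem?_eq_getElem _
          conv at h1 => lhs; rw [hr]
          rw [List.getElem?_map, List.getElem?_eq_getElem hjr] at h1
          simpa using h1.symm
        have h2 : lastSnd (rows[j]'hjr) ≠ x.2 := by
          rw [lastSnd_eq_getLast (v.ne _ (List.getElem_mem hjr))]
          exact hsnd.2 _ (hmemA (hlastmem hjr))
        rw [hrj] at h0; omega
      have hxlta : ∀ a ∈ rows[i]'hilen', x.2 < a.2 := fun a ha =>
        lt_of_lt_of_le hxlt (lastSnd_le_of_mem hρne (v.incr _ (List.getElem_mem hilen')) ha)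
      have hmemρA : ∀ a ∈ rows[i]'hilen', a ∈ A := fun a ha =>
        hmemA (by rw [row_eq hilen']; exact ha)
      rw [hst]
      refine ⟨rows.set i ((rows[i]'hilen') ++ [x]), ⟨?_, ?_, ?_, ?_⟩, ?_, ?_, ?_, ?_⟩
      · intro ρ'' h
        rcases List.mem_or_eq_of_mem_set h with h' | h'
        · exact v.ne _ h'
        · rw [h']; simp
      · exact (flatten_set_concat_perm rows i hilen' [x]).trans (v.perm.append_right [x])
      · intro ρ'' h
        rcases List.mem_or_eq_of_mem_set h with h' | h'
        · exact v.incr _ h'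
        · rw [h']
          refine List.pairwise_append.mpr ⟨v.incr _ (List.getElem_mem hilen'),
            List.pairwise_singleton _ _, ?_⟩
          intro a ha b hb
          rw [List.mem_singleton.mp hb]
          exact ⟨hfstlt a (hmemρA a ha), hxlta a ha⟩
      · intro j b hb
        rcases eq_or_ne (j+1) i with he | hne
        · rw [he, row_set_self hilen'] at hb
          rcases List.mem_append.mp hb with hbρ | hbx
          · obtain ⟨a, ha, h1, h2⟩ := v.cover j b (by rw [he, row_eq hilen']; exact hbρ)
            exact ⟨a, by rw [row_set_ne (by omega)]; exact ha, h1, h2⟩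
          · rw [List.mem_singleton.mp hbx]
            have hj : j < rows.length := by omega
            refine ⟨(rows[j]'hj).getLast (v.ne _ (List.getElem_mem hj)), ?_, ?_, ?_⟩
            · rw [row_set_ne (by omega)]; exact hlastmem hj
            · exact hfstlt _ (hmemA (hlastmem hj))
            · have := hjlt (show j < i by omega)
              rwa [lastSnd_eq_getLast (v.ne _ (List.getElem_mem hj))] at this
        · rw [row_set_ne (Ne.symm hne)] at hb
          obtain ⟨a, ha, h1, h2⟩ := v.cover j b hb
          rcases eq_or_ne j i with he2 | hne2
          · refine ⟨a, ?_, h1, h2⟩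
            subst he2
            rw [row_set_self hilen']
            rw [row_eq hilen'] at ha
            exact List.mem_append_left _ ha
          · exact ⟨a, by rw [row_set_ne (Ne.symm hne2)]; exact ha, h1, h2⟩
      · rw [List.map_set, lastSnd_concat]
        conv_lhs => rw [hr]
      · rw [List.map_set, headFst_concat hρne]
        rw [hq, set_getElem_self']
        rw [List.getElem?_map, List.getElem?_eq_getElem hilen']
        rfl
      · refine List.pairwise_append.mpr ⟨hBs, List.pairwise_singleton _ _, ?_⟩
        intro y hy z hz
        rw [List.mem_singleton.mp hz]
        have hy1 : y.1 ∈ (bumpMS rows).map Prod.fst :=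
          (hBp.map Prod.fst).subset (List.mem_map_of_mem hy)
        have hy2 : y.1 ∈ rows.flatten.map Prod.fst := (bump_fst_sub rows).subset hy1
        obtain ⟨p, hp, hpe⟩ := List.mem_map.mp hy2
        rw [← hpe]
        exact hfstlt p (v.perm.subset hp)
      · have hL : i < (rows.map rowPairs).length := by rw [List.length_map]; exact hilen'
        have hLi : (rows.map rowPairs)[i]'hL = rowPairs (rows[i]'hilen') := List.getElem_map _
        have hbm : bumpMS (rows.set i ((rows[i]'hilen') ++ [x]))
            = ((rows.map rowPairs).set i ((rows.map rowPairs)[i]'hL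
              ++ [(x.1, lastSnd (rows[i]'hilen'))])).flatten := by
          rw [bumpMS, List.map_set, rowPairs_concat hρne, hLi,
            lastSnd_eq_getLast hρne]
        rw [hbm]
        refine (Perm.trans ?_ (flatten_set_concat_perm (rows.map rowPairs) i hL _).symm)
        exact hBp.append_right _

end RSproof

namespace RSproof
open List

theorem tr_injective : Function.Injective tr := by
  intro a b h
  simp [tr, Prod.ext_iff] at h
  exact Prod.ext h.2 h.1

theorem trRow_nil : trRow [] = [] := rfl

theorem trRow_ne {ρ : List Pt} (h : ρ ≠ []) : trRow ρ ≠ [] := by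
  simp [trRow, h]

theorem lastSnd_trRow (ρ : List Pt) : lastSnd (trRow ρ) = headFst ρ := by
  simp [lastSnd, headFst, trRow, List.getLast?_eq_head?_reverse, List.map_reverse,
    List.head?_map, tr, Option.map_map]
  rfl

theorem headFst_trRow (ρ : List Pt) : headFst (trRow ρ) = lastSnd ρ := by
  simp [lastSnd, headFst, trRow, List.head?_map, List.head?_reverse, Option.map_map]
  rfl

theorem row_map_trRow (rows : List (List Pt)) (j : ℕ) :
    row (rows.map trRow) j = trRow (row rows j) := by
  rw [row, row, List.getElem?_map]
  rcases h : rows[j]? with _ | ρ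
  · simp [trRow]
  · simp

theorem flatten_map_perm {α β : Type*} (f g : List α → List β) (L : List (List α))
    (h : ∀ ρ ∈ L, f ρ ~ g ρ) : (L.map f).flatten ~ (L.map g).flatten := by
  induction L with
  | nil => exact List.Perm.refl _
  | cons ρ L IH =>
    simp only [List.map_cons, List.flatten_cons]
    exact (h ρ List.mem_cons_self).append (IH (fun ρ' h' => h ρ' (List.mem_cons_of_mem _ h')))

theorem trRow_perm (ρ : List Pt) : trRow ρ ~ ρ.map tr := (ρ.reverse_perm.map tr)

theorem valid_tpose {A rows} (v : Valid A rows) : Valid (tpose A) (rows.map trRow) := by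
  refine ⟨?_, ?_, ?_, ?_⟩
  · intro ρ'' h
    obtain ⟨ρ, hρ, rfl⟩ := List.mem_map.mp h
    exact trRow_ne (v.ne ρ hρ)
  · have h1 : (rows.map trRow).flatten ~ (rows.map (List.map tr)).flatten :=
      flatten_map_perm _ _ rows (fun ρ _ => trRow_perm ρ)
    have h2 : (rows.map (List.map tr)).flatten = (rows.flatten).map tr :=
      List.map_flatten.symm
    exact (h1.trans (h2 ▸ v.perm.map tr)).trans (sortF_perm _).symm
  · intro ρ'' h
    obtain ⟨ρ, hρ, rfl⟩ := List.mem_map.mp h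
    rw [trRow, List.pairwise_map, List.pairwise_reverse]
    exact (v.incr ρ hρ).imp (fun h => ⟨h.2, h.1⟩)
  · intro j b hb
    rw [row_map_trRow] at hb
    obtain ⟨b₀, hb₀, rfl⟩ := List.mem_map.mp hb
    rw [List.mem_reverse] at hb₀
    obtain ⟨a₀, ha₀, h1, h2⟩ := v.cover j b₀ hb₀
    refine ⟨tr a₀, ?_, h2, h1⟩
    rw [row_map_trRow]
    exact List.mem_map_of_mem (List.mem_reverse.mpr ha₀)

theorem trRow_cons (a : Pt) (ρ : List Pt) : trRow (a :: ρ) = trRow ρ ++ [tr a] := by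
  simp [trRow]

theorem rowPairs_trRow_perm : ∀ ρ : List Pt, rowPairs (trRow ρ) ~ (rowPairs ρ).map tr := by
  intro ρ
  induction ρ with
  | nil => exact List.Perm.refl _
  | cons a ρ IH =>
    rcases eq_or_ne ρ [] with rfl | hρ
    · exact List.Perm.refl _
    · rw [trRow_cons, rowPairs_concat (trRow_ne hρ) (tr a), rowPairs_cons hρ a]
      have hg : ((trRow ρ).getLast (trRow_ne hρ)).2 = (ρ.head hρ).1 := by
        rw [← lastSnd_eq_getLast (trRow_ne hρ), lastSnd_trRow, headFst_eq_head hρ]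
      rw [hg]
      have : ((tr a).1, (ρ.head hρ).1) = tr ((ρ.head hρ).1, a.2) := rfl
      rw [this, List.map_cons]
      exact (List.perm_append_singleton _ _).trans (IH.cons _)

theorem bumpMS_trRows_perm (rows : List (List Pt)) :
    bumpMS (rows.map trRow) ~ (bumpMS rows).map tr := by
  rw [bumpMS, List.map_map]
  have h1 : (rows.map (rowPairs ∘ trRow)).flatten ~ (rows.map (List.map tr ∘ rowPairs)).flatten :=
    flatten_map_perm _ _ rows (fun ρ _ => by
      simp only [Function.comp_apply]
      exact rowPairs_trRow_perm ρ)
  refine h1.trans ?_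
  have : rows.map (List.map tr ∘ rowPairs) = (rows.map rowPairs).map (List.map tr) := by
    rw [List.map_map]
  rw [this, ← List.map_flatten, bumpMS]

end RSproof

namespace RSproof
open List

theorem F_len_sum : ∀ A : List Pt, (F A).2.1.length + (F A).2.2.length = A.length := by
  intro A
  induction A using List.reverseRecOn with
  | nil => rfl
  | append_singleton A x IH =>
    rw [F_append]
    rcases hfi : ((F A).1).findIdx? (fun b => decide (x.2 < b)) with _ | i
    · have hst : step1 (F A) x = ((F A).1 ++ [x.2], (F A).2.1 ++ [x.1], (F A).2.2) := by
        simp [step1, rowInsert, hfi]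
      rw [hst]
      simp only [List.length_append, List.length_singleton]
      omega
    · have hst : step1 (F A) x
          = ((F A).1.set i x.2, (F A).2.1, (F A).2.2 ++ [(x.1, (F A).1.getD i 0)]) := by
        simp [step1, rowInsert, hfi]
      rw [hst]
      simp only [List.length_append, List.length_singleton]
      omega

theorem bumps_short {A : List Pt} (h : A ≠ []) : (F A).2.2.length < A.length := by
  obtain ⟨_, hlen, hne⟩ := decomp A h
  have h1 := F_len_sum A
  have h2 : (F A).1.length ≠ 0 := fun hc => hne (List.length_eq_zero_iff.mp hc)
  omega

theorem map_fst_tr (l : List Pt) : (l.map tr).map Prod.fst = l.map Prod.snd := by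
  rw [List.map_map]; rfl

theorem map_snd_tr (l : List Pt) : (l.map tr).map Prod.snd = l.map Prod.fst := by
  rw [List.map_map]; rfl

theorem BW_nodup_fst {A : List Pt} (h : BW A) : (A.map Prod.fst).Nodup :=
  List.pairwise_map.mpr (h.1.imp (fun h => ne_of_lt h))

theorem BW_nodupA {A : List Pt} (h : BW A) : A.Nodup := (BW_nodup_fst h).of_map

theorem BW_tpose {A : List Pt} (h : BW A) : BW (tpose A) := by
  constructor
  · apply sortF_sorted
    rw [map_fst_tr]
    exact h.2
  · have h1 : (tpose A).map Prod.snd ~ (A.map tr).map Prod.snd := (sortF_perm _).map _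
    rw [map_snd_tr] at h1
    exact h1.nodup_iff.mpr (BW_nodup_fst h)

theorem nodup_tpose {A : List Pt} (h : BW A) : (tpose A).Nodup :=
  ((sortF_perm _).nodup_iff).mpr (((BW_nodupA h).map tr_injective))

theorem tpose_len (A : List Pt) : (tpose A).length = A.length := by
  have := (sortF_perm (A.map tr)).length_eq
  rw [List.length_map] at this
  exact this

theorem main : ∀ (n : ℕ) (A : List Pt), A.length ≤ n → BW A →
    (RSg A).2 = (RSg (tpose A)).1 := by
  intro n
  induction n with
  | zero =>
    intro A hl _
    rw [List.length_eq_zero_iff.mp (Nat.le_zero.mp hl)]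
    rfl
  | succ n IH =>
    intro A hl hBW
    rcases eq_or_ne A [] with rfl | hA
    · rfl
    · obtain ⟨rows, v, hr, hq, hBs, hBp⟩ := invariant A hBW
      obtain ⟨rows₂, v₂, hr₂, hq₂, hBs₂, hBp₂⟩ := invariant (tpose A) (BW_tpose hBW)
      have hrows₂ : rows₂ = rows.map trRow := valid_unique (nodup_tpose hBW) v₂ (valid_tpose v)
      have htA : tpose A ≠ [] := by
        intro h
        apply hA
        have := tpose_len A
        rw [h] at this
        exact List.length_eq_zero_iff.mp this.symm
      obtain ⟨hdec, _, _⟩ := decomp A hA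
      obtain ⟨hdec₂, _, _⟩ := decomp (tpose A) htA
      rw [hdec, hdec₂]
      simp only
      congr 1
      · rw [hq, hr₂, hrows₂, List.map_map]
        exact List.map_congr_left (fun ρ _ => (lastSnd_trRow ρ).symm)
      · have hndb : ((F A).2.2.map Prod.snd).Nodup := by
          have h1 : (F A).2.2.map Prod.snd ~ (bumpMS rows).map Prod.snd := hBp.map _
          have h2 : (rows.flatten.map Prod.snd).Nodup :=
            ((v.perm.map Prod.snd).nodup_iff).mpr hBW.2
          exact h1.nodup_iff.mpr ((bump_snd_sub rows).nodup h2)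
        have hBWb : BW (F A).2.2 := ⟨hBs, hndb⟩
        have hlb : (F A).2.2.length ≤ n := by
          have := bumps_short hA
          omega
        have hid : (F (tpose A)).2.2 = tpose ((F A).2.2) := by
          apply sortedFst_unique
          · refine (hBp₂.trans ?_).trans (sortF_perm _).symm
            rw [hrows₂]
            exact (bumpMS_trRows_perm rows).trans (hBp.symm.map tr)
          · exact hBs₂
          · apply sortF_sorted
            rw [map_fst_tr]
            exact hndb
        rw [hid]
        exact IH _ hlb hBWb

end RSproof

def List.enumFrom {α : Type*} : ℕ → List α → List (ℕ × α)
  | _, [] => []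
  | n, a :: l => (n, a) :: List.enumFrom (n + 1) l

theorem List.enumFrom_cons {α : Type*} (n : ℕ) (a : α) (l : List α) :
    (a :: l).enumFrom n = (n, a) :: l.enumFrom (n + 1) := rfl

@[simp] theorem List.length_enumFrom {α : Type*} : ∀ (n : ℕ) (l : List α),
    (l.enumFrom n).length = l.length
  | _, [] => rfl
  | n, _ :: l => by simp [List.enumFrom, List.length_enumFrom (n + 1) l]

theorem List.getElem_enumFrom {α : Type*} : ∀ (l : List α) (n i : ℕ)
    (h : i < (l.enumFrom n).length), (l.enumFrom n)[i] = (n + i, l[i]'(by simpa using h))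
  | [], _, _, h => by simp at h
  | a :: l, n, 0, _ => by simp [List.enumFrom]
  | a :: l, n, i + 1, h => by
    simp only [List.enumFrom, List.getElem_cons_succ, List.getElem_enumFrom l (n + 1) i,
      Prod.mk.injEq]
    exact ⟨by omega, trivial⟩

namespace RSproof
open List

theorem RS_foldl (l : List ℕ) : ∀ (P Q : List (List ℕ)) (n : ℕ),
    l.foldl (fun (st : List (List ℕ) × List (List ℕ) × ℕ) a =>
      let P' := insertRows st.1 a
      (P', recordGrow st.2.1 P' st.2.2, st.2.2 + 1)) (P, Q, n)
    = (((l.enumFrom n).foldl (fun PQ p =>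
        (insertRows PQ.1 p.2, recordGrow PQ.2 (insertRows PQ.1 p.2) p.1)) (P, Q)).1,
       ((l.enumFrom n).foldl (fun PQ p =>
        (insertRows PQ.1 p.2, recordGrow PQ.2 (insertRows PQ.1 p.2) p.1)) (P, Q)).2,
       n + l.length) := by
  induction l with
  | nil => intro P Q n; simp [List.enumFrom]
  | cons a l IH =>
    intro P Q n
    simp only [List.foldl_cons, List.enumFrom_cons]
    rw [IH]
    simp only [List.length_cons]
    refine Prod.ext rfl (Prod.ext rfl ?_)
    simp
    omega

theorem RS_eq_RSg (l : List ℕ) : RS l = RSg (l.enumFrom 0) := by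
  rw [RS, RS_foldl l [] [] 0]
  rfl

theorem enumFrom_ofFn {m : ℕ} (f : Fin m → ℕ) :
    (List.ofFn f).enumFrom 0 = List.ofFn (fun i : Fin m => ((i : ℕ), f i)) := by
  apply List.ext_getElem
  · simp
  · intro i h1 h2
    simp [List.getElem_enumFrom, List.getElem_ofFn]

end RSproof


/-- for `w ∈ S_m`, the recording tableau of `w` equals the insertion
tableau of `w⁻¹`: `Q(w) = P(w⁻¹)`. -/
theorem stmt11 (m : ℕ) (w : Equiv.Perm (Fin m)) :
    (RS (List.ofFn fun i : Fin m => (w i : ℕ))).2 =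
      (RS (List.ofFn fun i : Fin m => (w⁻¹ i : ℕ))).1 := by
  open RSproof List in
  have hRS1 : RS (List.ofFn fun i : Fin m => (w i : ℕ))
      = RSg (List.ofFn fun i : Fin m => ((i : ℕ), (w i : ℕ))) := by
    rw [RS_eq_RSg, enumFrom_ofFn]
  have hRS2 : RS (List.ofFn fun i : Fin m => (w⁻¹ i : ℕ))
      = RSg (List.ofFn fun i : Fin m => ((i : ℕ), (w⁻¹ i : ℕ))) := by
    rw [RS_eq_RSg, enumFrom_ofFn]
  set A : List RSproof.Pt := List.ofFn (fun i : Fin m => ((i : ℕ), (w i : ℕ))) with hA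
  have hBW : BW A := by
    constructor
    · rw [hA]
      exact List.pairwise_ofFn.mpr (fun i j h => by simpa using (Fin.lt_iff_val_lt_val.mp h))
    · rw [hA, List.map_ofFn]
      refine List.nodup_ofFn.mpr ?_
      intro i j h
      simp only [Function.comp_apply] at h
      exact w.injective (Fin.val_injective h)
  have hm := main A.length A le_rfl hBW
  have htp : tpose A = List.ofFn (fun v : Fin m => ((v : ℕ), ((w⁻¹) v : ℕ))) := by
    apply sortedFst_unique
    · refine (sortF_perm _).trans ?_
      have h1 : A.map tr = List.ofFn (fun i : Fin m => ((w i : ℕ), (i : ℕ))) := by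
        rw [hA, List.map_ofFn]
        rfl
      rw [h1]
      refine (List.perm_ext_iff_of_nodup ?_ ?_).mpr ?_
      · exact List.nodup_ofFn.mpr (fun i j h => w.injective (Fin.val_injective (congrArg Prod.fst h)))
      · exact List.nodup_ofFn.mpr (fun i j h => Fin.val_injective (congrArg Prod.fst h))
      · intro x
        rw [List.mem_ofFn, List.mem_ofFn]
        constructor
        · rintro ⟨i, rfl⟩
          exact ⟨w i, by simp⟩
        · rintro ⟨v, rfl⟩
          exact ⟨w⁻¹ v, by simp⟩
    · apply sortF_sorted
      rw [map_fst_tr, hA, List.map_ofFn]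
      exact List.nodup_ofFn.mpr (fun i j h => w.injective (Fin.val_injective h))
    · exact List.pairwise_ofFn.mpr (fun i j h => by simpa using (Fin.lt_iff_val_lt_val.mp h))
  rw [hRS1, hRS2, hm, htp]
end

section
/- Let T be a c-semistandard tableau of type μ = (μ_1,...,μ_r) on a Young diagram, and let P_T be the filling obtained from T by replacing, for each i and reading the occurrences of symbol i from the bottom row to the top row, the j-th such occurrence by the j-th member of the decreasing sequence μ_1+...+μ_i, μ_1+...+μ_i − 1, ..., μ_1+...+μ_{i-1}+1. Then P_T is a standard Young tableau with entries 1,...,m; moreover distinct c-semistandard tableaux T of type μ yield distinct standard tableaux P_T. -/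
/- Conventions: cells of a Young diagram are `(row, column)`, 0-based (Mathlib's
`YoungDiagram`); symbols are 0-based (`k` here is the paper's symbol `k+1`, with
`r = μ.length`), and the entries of the standard tableau `P_T` are `0, …, m-1`
(the paper's `1, …, m` shifted by one).  The paper's decreasing block sequence for
symbol `k` is `μ₁+⋯+μ_{k+1} - 1, …, μ₁+⋯+μ_k` here; reading the occurrences of `k`
from the bottom row to the top row, the `j`-th one gets the `j`-th member, i.e. the
cell `c` gets `μ.sizeUpTo (k+1) - 1 - #(occurrences of k in lower rows)`.  Since a
c-semistandard tableau has at most one occurrence of each symbol per row, this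
matches the paper's replacement rule. -/

/-- `T` is a c-semistandard filling of the Young diagram `D` of type `μ`:
symbol `k` occurs `μ_k` times, entries are non-decreasing down columns and strictly
increasing along rows. -/
def IsCSemistandard {m : ℕ} (μ : Composition m) (D : YoungDiagram) (T : ℕ × ℕ → ℕ) : Prop :=
  (∀ c ∈ D.cells, T c < μ.length) ∧
  (∀ k : Fin μ.length, (D.cells.filter (fun c => T c = (k : ℕ))).card = μ.blocksFun k) ∧
  (∀ i₁ i₂ j : ℕ, (i₁, j) ∈ D → (i₂, j) ∈ D → i₁ ≤ i₂ → T (i₁, j) ≤ T (i₂, j)) ∧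
  (∀ i j₁ j₂ : ℕ, (i, j₁) ∈ D → (i, j₂) ∈ D → j₁ < j₂ → T (i, j₁) < T (i, j₂))

/-- The entry of `P_T` at the cell `c`. -/
def PTval {m : ℕ} (μ : Composition m) (D : YoungDiagram) (T : ℕ × ℕ → ℕ)
    (c : ℕ × ℕ) : ℕ :=
  μ.sizeUpTo (T c + 1) - 1 - (D.cells.filter (fun c' => T c' = T c ∧ c.1 < c'.1)).card

/-- for a c-semistandard tableau `T` of type `μ` (a composition of `m`)
on a Young diagram `D` with `m` cells, `P_T` is a standard Young tableau with entries
`0, …, m-1` (entries distinct, strictly increasing along rows and down columns), and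
distinct c-semistandard tableaux of type `μ` yield distinct standard tableaux. -/
theorem stmt15 (m : ℕ) (μ : Composition m) (D : YoungDiagram) (hD : D.card = m)
    (T : ℕ × ℕ → ℕ) (hT : IsCSemistandard μ D T) :
    (∀ c ∈ D.cells, PTval μ D T c < m) ∧
    (∀ c ∈ D.cells, ∀ c' ∈ D.cells, PTval μ D T c = PTval μ D T c' → c = c') ∧
    (∀ i j₁ j₂ : ℕ, (i, j₁) ∈ D → (i, j₂) ∈ D → j₁ < j₂ →
        PTval μ D T (i, j₁) < PTval μ D T (i, j₂)) ∧
    (∀ i₁ i₂ j : ℕ, (i₁, j) ∈ D → (i₂, j) ∈ D → i₁ < i₂ →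
        PTval μ D T (i₁, j) < PTval μ D T (i₂, j)) ∧
    (∀ T' : ℕ × ℕ → ℕ, IsCSemistandard μ D T' →
        (∀ c ∈ D.cells, PTval μ D T c = PTval μ D T' c) →
        ∀ c ∈ D.cells, T c = T' c) := by
  -- abbreviation for the count of lower occurrences
  have hNlt : ∀ (T : ℕ × ℕ → ℕ), IsCSemistandard μ D T → ∀ c ∈ D.cells,
      (D.cells.filter (fun c' => T c' = T c ∧ c.1 < c'.1)).card
        < μ.sizeUpTo (T c + 1) - μ.sizeUpTo (T c) := by
    intro T hT c hc
    have hk : T c < μ.length := hT.1 c hc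
    have hcount : (D.cells.filter (fun c' => T c' = T c)).card
        = μ.blocksFun ⟨T c, hk⟩ := hT.2.1 ⟨T c, hk⟩
    have hsz := μ.sizeUpTo_succ' ⟨T c, hk⟩
    have hsub : (D.cells.filter (fun c' => T c' = T c ∧ c.1 < c'.1))
        ⊂ (D.cells.filter (fun c' => T c' = T c)) := by
      constructor
      · intro x hx
        simp only [Finset.mem_filter] at hx ⊢
        exact ⟨hx.1, hx.2.1⟩
      · intro hsub'
        have hcmem : c ∈ D.cells.filter (fun c' => T c' = T c) := by
          simp [hc]
        have := hsub' hcmem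
        simp at this
    have hlt : (D.cells.filter (fun c' => T c' = T c ∧ c.1 < c'.1)).card
        < (D.cells.filter (fun c' => T c' = T c)).card := Finset.card_lt_card hsub
    simp only [Fin.val_mk] at hsz
    omega
  -- block membership of PTval
  have hblock : ∀ (T : ℕ × ℕ → ℕ), IsCSemistandard μ D T → ∀ c ∈ D.cells,
      μ.sizeUpTo (T c) ≤ PTval μ D T c ∧ PTval μ D T c < μ.sizeUpTo (T c + 1) := by
    intro T hT c hc
    have h1 := hNlt T hT c hc
    have hk : T c < μ.length := hT.1 c hc
    have hsz := μ.sizeUpTo_succ' ⟨T c, hk⟩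
    have hpos : 0 < μ.blocksFun ⟨T c, hk⟩ := μ.one_le_blocksFun _
    simp only [Fin.val_mk] at hsz
    unfold PTval
    omega
  -- disjointness of blocks
  have hblockdisj : ∀ k₁ k₂ x : ℕ,
      μ.sizeUpTo k₁ ≤ x → x < μ.sizeUpTo (k₁ + 1) →
      μ.sizeUpTo k₂ ≤ x → x < μ.sizeUpTo (k₂ + 1) → k₁ = k₂ := by
    intro k₁ k₂ x h1 h2 h3 h4
    rcases lt_trichotomy k₁ k₂ with h | h | h
    · have := μ.monotone_sizeUpTo (show k₁ + 1 ≤ k₂ from h)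
      omega
    · exact h
    · have := μ.monotone_sizeUpTo (show k₂ + 1 ≤ k₁ from h)
      omega
  -- symbols agree when PTvals agree
  have hsymb : ∀ (T' : ℕ × ℕ → ℕ), IsCSemistandard μ D T' → ∀ c ∈ D.cells,
      PTval μ D T c = PTval μ D T' c → T c = T' c := by
    intro T' hT' c hc heq
    obtain ⟨h1, h2⟩ := hblock T hT c hc
    obtain ⟨h3, h4⟩ := hblock T' hT' c hc
    rw [heq] at h1 h2
    exact hblockdisj _ _ _ h1 h2 h3 h4
  -- lower-count strictly decreases going down among equal symbols
  have hNmono : ∀ c ∈ D.cells, ∀ c' ∈ D.cells, T c = T c' → c.1 < c'.1 →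
      (D.cells.filter (fun x => T x = T c ∧ c'.1 < x.1)).card
        < (D.cells.filter (fun x => T x = T c ∧ c.1 < x.1)).card := by
    intro c hc c' hc' hTeq hlt
    apply Finset.card_lt_card
    constructor
    · intro x hx
      simp only [Finset.mem_filter] at hx ⊢
      exact ⟨hx.1, hx.2.1, lt_trans hlt hx.2.2⟩
    · intro hsub'
      have hc'mem : c' ∈ D.cells.filter (fun x => T x = T c ∧ c.1 < x.1) := by
        simp [hc', hTeq.symm, hlt]
      have := hsub' hc'mem
      simp at this
  -- at most one occurrence of a symbol per row
  have hrow : ∀ c ∈ D.cells, ∀ c' ∈ D.cells, T c = T c' → c.1 = c'.1 → c = c' := by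
    intro c hc c' hc' hTeq hr
    rcases lt_trichotomy c.2 c'.2 with h | h | h
    · have := hT.2.2.2 c.1 c.2 c'.2 (by simpa using hc) (by rw [hr]; simpa using hc') h
      rw [show (c.1, c.2) = c from rfl, hr, show (c'.1, c'.2) = c' from rfl] at this
      omega
    · exact Prod.ext hr h
    · have := hT.2.2.2 c.1 c'.2 c.2 (by rw [hr]; simpa using hc') (by simpa using hc) h
      rw [show (c.1, c.2) = c from rfl, hr, show (c'.1, c'.2) = c' from rfl] at this
      omega
  have hone : ∀ k, k < μ.length → 0 < μ.sizeUpTo (k + 1) := by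
    intro k hk
    have hsz := μ.sizeUpTo_succ' ⟨k, hk⟩
    have := μ.one_le_blocksFun ⟨k, hk⟩
    simp only [Fin.val_mk] at hsz
    omega
  refine ⟨?_, ?_, ?_, ?_, ?_⟩
  · intro c hc
    have h2 := (hblock T hT c hc).2
    have h3 := μ.sizeUpTo_le (T c + 1)
    omega
  · -- injectivity
    intro c hc c' hc' heq
    have hTT : T c = T c' := by
      obtain ⟨h1, h2⟩ := hblock T hT c hc
      obtain ⟨h3, h4⟩ := hblock T hT c' hc'
      rw [heq] at h1 h2
      exact hblockdisj _ _ _ h1 h2 h3 h4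
    have hk : T c < μ.length := hT.1 c hc
    have hN : (D.cells.filter (fun x => T x = T c ∧ c.1 < x.1)).card
        = (D.cells.filter (fun x => T x = T c ∧ c'.1 < x.1)).card := by
      have h1 := hNlt T hT c hc
      have h2 := hNlt T hT c' hc'
      unfold PTval at heq
      simp only [← hTT] at heq h2
      have := hone (T c) hk
      omega
    have hreq : c.1 = c'.1 := by
      rcases lt_trichotomy c.1 c'.1 with h | h | h
      · have := hNmono c hc c' hc' hTT h
        omega
      · exact h
      · have h5 := hNmono c' hc' c hc hTT.symm h
        simp only [← hTT] at h5
        omega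
    exact hrow c hc c' hc' hTT hreq
  · -- rows strictly increasing
    intro i j₁ j₂ h1 h2 hj
    have hTlt := hT.2.2.2 i j₁ j₂ h1 h2 hj
    have hb1 := (hblock T hT (i, j₁) (by simpa using h1)).2
    have hb2 := (hblock T hT (i, j₂) (by simpa using h2)).1
    have hmono := μ.monotone_sizeUpTo (show T (i, j₁) + 1 ≤ T (i, j₂) from hTlt)
    omega
  · -- columns strictly increasing
    intro i₁ i₂ j h1 h2 hi
    have hTle := hT.2.2.1 i₁ i₂ j h1 h2 (le_of_lt hi)
    rcases lt_or_eq_of_le hTle with hlt | heq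
    · have hb1 := (hblock T hT (i₁, j) (by simpa using h1)).2
      have hb2 := (hblock T hT (i₂, j) (by simpa using h2)).1
      have hmono := μ.monotone_sizeUpTo (show T (i₁, j) + 1 ≤ T (i₂, j) from hlt)
      omega
    · have hN := hNmono (i₁, j) (by simpa using h1) (i₂, j) (by simpa using h2) heq hi
      simp only [Prod.fst] at hN
      have h3 := hNlt T hT (i₁, j) (by simpa using h1)
      have hk : T (i₁, j) < μ.length := hT.1 _ (by simpa using h1)
      have := hone (T (i₁, j)) hk
      unfold PTval
      simp only [← heq]
      simp only [Prod.fst] at h3 ⊢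
      omega
  · intro T' hT' hvals c hc
    exact hsymb T' hT' c hc (hvals c hc)
end

section
/- Let λ and μ be compositions of m with λ'' = μ' (i.e. μ is a rearrangement of the conjugate λ' of the partition-rearrangement of λ). Then there exists a unique diagram D (finite subset of ℤ² with no empty rows or columns) whose row-composition is λ and whose column-composition is μ, and this D is a special diagram (obtained from a Young diagram by permuting rows and columns). -/
/- Diagrams are finite subsets of `ℕ × ℕ` (cells `(row, column)`, 0-based), with no
empty rows or columns before an occupied one ("principal" diagrams).  The hypothesis
`λ'' = μ'`, i.e. "`μ` is a rearrangement of `λ'`", is expressed by saying that the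
multiset of parts of `μ` equals the multiset of (nonzero) parts of the conjugate
`λ'` of `λ`, where `λ'_j = #{i : λ_i > j}` (0-based `j`). -/

/-- A principal diagram: every nonempty row (resp. column) index is preceded only by
nonempty rows (resp. columns). -/
def IsPrincipalDiagram (D : Finset (ℕ × ℕ)) : Prop :=
  (∀ c ∈ D, ∀ i < c.1, ∃ j, (i, j) ∈ D) ∧ (∀ c ∈ D, ∀ j < c.2, ∃ i, (i, j) ∈ D)

/-- The row-composition of a diagram. -/
def rowComp (D : Finset (ℕ × ℕ)) (i : ℕ) : ℕ := (D.filter (fun c => c.1 = i)).card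

/-- The column-composition of a diagram. -/
def colComp (D : Finset (ℕ × ℕ)) (j : ℕ) : ℕ := (D.filter (fun c => c.2 = j)).card

/-- A special diagram: the image of (the cells of) a Young diagram under a permutation
of the rows and a permutation of the columns. -/
def IsSpecialDiagram (D : Finset (ℕ × ℕ)) : Prop :=
  ∃ (f g : ℕ → ℕ), Function.Bijective f ∧ Function.Bijective g ∧
    ∃ Y : YoungDiagram, D = Y.cells.image (fun c => (f c.1, g c.2))

/-!
Order the rows by decreasing part of `λ` (ties by index) and let `ρ i` be the rank of row `i`.
Weight every cell of a diagram by the rank of its row. With row counts `λ` the total weight is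
`∑ i, λ i * ρ i`, whatever the diagram; read column by column, column `j` carries `μ j` distinct
ranks, so its weight is at least `0 + 1 + ⋯ + (μ j - 1)`, with equality iff its cells are the
`μ j` rows of largest parts. Filling every column that way gives row counts `λ` exactly because
`μ` is a rearrangement of `λ'`; this diagram attains the bound in each column, hence is the only
one with these row and column counts. Ranking the columns by decreasing `μ` as well turns it into
the Young diagram of `λ''`.
-/

open Finset

namespace Finset

variable {ι α : Type*} [LinearOrder α]

lemma range_filter_lt (m v : ℕ) : {x ∈ range m | x < v} = range (min v m) := by
  ext x
  simp [and_comm]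

def rankBy (s : Finset ι) (f : ι → α) (i : ι) : ℕ := #{j ∈ s | f j < f i}

variable {s : Finset ι} {f : ι → α} {i j : ι}

lemma rankBy_lt_rankBy (hi : i ∈ s) (h : f i < f j) : s.rankBy f i < s.rankBy f j := by
  refine card_lt_card ((ssubset_iff_of_subset fun x hx => ?_).2 ⟨i, ?_, ?_⟩)
  · simp only [mem_filter] at hx ⊢
    exact ⟨hx.1, hx.2.trans h⟩
  · exact mem_filter.2 ⟨hi, h⟩
  · simp

lemma rankBy_lt_card (hi : i ∈ s) : s.rankBy f i < #s :=
  card_lt_card (filter_ssubset.2 ⟨i, hi, lt_irrefl _⟩)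

lemma rankBy_injOn (hf : Set.InjOn f s) : Set.InjOn (s.rankBy f) s := by
  intro i hi j hj hij
  by_contra hne
  rcases (hf.ne hi hj hne).lt_or_gt with h | h
  · exact (rankBy_lt_rankBy hi h).ne hij
  · exact (rankBy_lt_rankBy hj h).ne' hij

lemma image_rankBy (hf : Set.InjOn f s) : s.image (s.rankBy f) = range #s := by
  refine eq_of_subset_of_card_le (fun r hr => ?_) ?_
  · obtain ⟨i, hi, rfl⟩ := mem_image.1 hr
    exact mem_range.2 (rankBy_lt_card hi)
  · rw [card_image_of_injOn (rankBy_injOn hf), card_range]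

lemma image_filter_rankBy_lt (hf : Set.InjOn f s) (v : ℕ) :
    {i ∈ s | s.rankBy f i < v}.image (s.rankBy f) = range (min v #s) := by
  rw [← filter_image (p := (· < v)), image_rankBy hf, range_filter_lt]

lemma rankBy_lt_card_filter_iff (hf : Set.InjOn f s) {p : ι → Prop} [DecidablePred p]
    (hp : ∀ i ∈ s, ∀ j ∈ s, f j < f i → p i → p j) (hi : i ∈ s) :
    s.rankBy f i < #{j ∈ s | p j} ↔ p i := by
  constructor
  · intro hlt
    by_contra hpi
    refine hlt.not_ge (card_le_card fun j hj => ?_)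
    simp only [mem_filter] at hj ⊢
    refine ⟨hj.1, lt_of_not_ge fun hij => hpi ?_⟩
    rcases hij.lt_or_eq with hij | hij
    · exact hp j hj.1 i hi hij hj.2
    · exact hf hj.1 hi hij.symm ▸ hj.2
  · intro hpi
    classical
    have hsub : insert i {j ∈ s | f j < f i} ⊆ {j ∈ s | p j} := by
      intro j hj
      rcases mem_insert.1 hj with rfl | hj
      · exact mem_filter.2 ⟨hi, hpi⟩
      · rw [mem_filter] at hj ⊢
        exact ⟨hj.1, hp i hi j hj.1 hj.2 hpi⟩
    have := card_le_card hsub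
    rwa [card_insert_of_notMem (by simp)] at this

lemma sum_range_card_lt_sum {S : Finset ℕ} (h : S ≠ range #S) :
    ∑ x ∈ range #S, x < ∑ x ∈ S, x := by
  set R := range #S
  have hcard : #(R \ S) = #(S \ R) := card_sdiff_comm (by simp [R])
  have hne : (R \ S).Nonempty := by
    rw [nonempty_iff_ne_empty, Ne, sdiff_eq_empty_iff_subset]
    exact fun hRS => h (eq_of_subset_of_card_le hRS (by simp [R])).symm
  calc ∑ x ∈ R, x = ∑ x ∈ R ∩ S, x + ∑ x ∈ R \ S, x := (sum_inter_add_sum_sdiff _ _ _).symm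
    _ < ∑ x ∈ R ∩ S, x + #(R \ S) • #S := by
      gcongr
      calc ∑ x ∈ R \ S, x < ∑ _x ∈ R \ S, #S :=
            sum_lt_sum_of_nonempty hne fun x hx => mem_range.1 (mem_sdiff.1 hx).1
        _ = _ := by simp
    _ ≤ ∑ x ∈ S ∩ R, x + ∑ x ∈ S \ R, x := by
      rw [inter_comm, hcard]
      gcongr
      exact card_nsmul_le_sum _ _ _ fun x hx =>
        not_lt.1 fun hx' => (mem_sdiff.1 hx).2 (mem_range.2 hx')
    _ = ∑ x ∈ S, x := sum_inter_add_sum_sdiff _ _ _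

lemma sum_range_card_le_sum (S : Finset ℕ) : ∑ x ∈ range #S, x ≤ ∑ x ∈ S, x := by
  by_cases h : S = range #S
  · rw [← h]
  · exact (sum_range_card_lt_sum h).le

end Finset

lemma Set.BijOn.exists_perm_eqOn {α : Type*} {s : Set α} (hs : s.Finite) {f : α → α}
    (hf : Set.BijOn f s s) : ∃ e : Equiv.Perm α, Set.EqOn e f s ∧ ∀ x, e x ∈ s ↔ x ∈ s := by
  classical
  have : Finite {x | x ∈ s} := hs.to_subtype
  refine ⟨(hf.equiv f).extendSubtype, fun x hx => ?_, fun x => ⟨fun h => ?_, fun hx => ?_⟩⟩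
  · rw [Equiv.extendSubtype_apply_of_mem _ _ hx]
    rfl
  · by_contra hx
    exact Equiv.extendSubtype_not_mem _ x hx h
  · exact Equiv.extendSubtype_mem _ x hx

def List.countGT (L : List ℕ) (t : ℕ) : ℕ := (L.filter (fun a => decide (t < a))).length

def List.conjugate (L : List ℕ) : List ℕ := (List.range (L.foldr max 0)).map L.countGT

/-- Indices ordered by decreasing entry, ties broken by increasing index. -/
def List.descKey (L : List ℕ) (i : ℕ) : ℕᵒᵈ ×ₗ ℕ := toLex (OrderDual.toDual (L.getD i 0), i)

def List.sortRank (L : List ℕ) : ℕ → ℕ := (Finset.range L.length).rankBy L.descKey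

namespace List

variable {L K : List ℕ} {i j : ℕ}

lemma getD_mem_of_lt (hi : i < L.length) : L.getD i 0 ∈ L := by
  rw [getD_eq_getElem _ _ hi]
  exact getElem_mem hi

lemma lt_length_of_getD_pos (h : 0 < L.getD i 0) : i < L.length :=
  not_le.1 fun hi => by rw [getD_eq_default _ _ hi] at h; exact h.ne rfl

lemma getD_le_foldr_max (L : List ℕ) (i : ℕ) : L.getD i 0 ≤ L.foldr max 0 := by
  rcases lt_or_ge i L.length with hi | hi
  · exact le_max_of_le' 0 (getD_mem_of_lt hi) le_rfl
  · rw [getD_eq_default _ _ hi]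
    exact Nat.zero_le _

lemma countGT_eq_card (L : List ℕ) (t : ℕ) :
    L.countGT t = #{i ∈ Finset.range L.length | t < L.getD i 0} := by
  induction L with
  | nil => simp [countGT]
  | cons a L ih =>
    rw [Finset.card_filter] at ih ⊢
    rw [length_cons, Finset.sum_range_succ']
    simp only [getD_cons_succ, getD_cons_zero, ← ih, countGT, filter_cons]
    split_ifs <;> simp_all [add_comm]

lemma countGT_antitone (L : List ℕ) : Antitone L.countGT := fun s t hst =>
  (L.monotone_filter_right fun a h => by simp at h ⊢; omega).length_le

lemma countGT_foldr_max (L : List ℕ) : L.countGT (L.foldr max 0) = 0 := by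
  simp only [countGT, length_eq_zero_iff, filter_eq_nil_iff, decide_eq_true_eq, not_lt]
  exact fun a ha => le_max_of_le' 0 ha le_rfl

lemma length_conjugate (L : List ℕ) : L.conjugate.length = L.foldr max 0 := by
  simp [conjugate]

lemma getD_conjugate (L : List ℕ) (s : ℕ) : L.conjugate.getD s 0 = L.countGT s := by
  rcases lt_or_ge s (L.foldr max 0) with hs | hs
  · rw [getD_eq_getElem _ _ (by rwa [length_conjugate])]
    simp [conjugate]
  · rw [getD_eq_default _ _ (by rwa [length_conjugate]), eq_comm]
    exact Nat.eq_zero_of_le_zero (countGT_foldr_max L ▸ countGT_antitone L hs)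

lemma descKey_injective (L : List ℕ) : Function.Injective L.descKey := fun _ _ h =>
  congrArg Prod.snd (toLex.injective h)

lemma getD_le_of_descKey_lt (h : L.descKey j < L.descKey i) : L.getD i 0 ≤ L.getD j 0 := by
  rcases Prod.Lex.toLex_lt_toLex.1 h with h | h
  · exact h.le
  · exact (OrderDual.toDual_inj.1 h.1).ge

lemma sortRank_lt_countGT_iff (hi : i < L.length) (t : ℕ) :
    L.sortRank i < L.countGT t ↔ t < L.getD i 0 := by
  rw [countGT_eq_card]
  exact rankBy_lt_card_filter_iff (p := fun j => t < L.getD j 0) L.descKey_injective.injOn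
    (fun _ _ _ _ hkey ht => ht.trans_le (getD_le_of_descKey_lt hkey)) (Finset.mem_range.2 hi)

lemma sortRank_injOn (L : List ℕ) : Set.InjOn L.sortRank (Finset.range L.length) :=
  rankBy_injOn L.descKey_injective.injOn

lemma image_filter_sortRank_lt (L : List ℕ) (v : ℕ) :
    {i ∈ Finset.range L.length | L.sortRank i < v}.image L.sortRank =
      Finset.range (min v L.length) := by
  rw [sortRank, image_filter_rankBy_lt L.descKey_injective.injOn, card_range]

lemma exists_perm_eqOn_sortRank (L : List ℕ) : ∃ e : Equiv.Perm ℕ,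
    (∀ i < L.length, e i = L.sortRank i) ∧ ∀ i, e i < L.length ↔ i < L.length := by
  have hbij : Set.BijOn L.sortRank (Finset.range L.length) (Finset.range L.length) := by
    have h := L.sortRank_injOn.bijOn_image
    rw [← coe_image, sortRank, image_rankBy L.descKey_injective.injOn, card_range] at h
    exact h
  obtain ⟨e, he, hmem⟩ := hbij.exists_perm_eqOn (Finset.range L.length).finite_toSet
  exact ⟨e, fun i hi => he (by simpa using hi), fun i => by simpa using hmem i⟩

lemma countGT_conjugate_sortRank (hi : i < L.length) :
    L.conjugate.countGT (L.sortRank i) = L.getD i 0 := by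
  simp_rw [countGT_eq_card, length_conjugate, getD_conjugate, sortRank_lt_countGT_iff hi,
    range_filter_lt, card_range]
  exact min_eq_left (L.getD_le_foldr_max i)

lemma getD_le_length_of_perm_conjugate (hK : K.Perm L.conjugate) (j : ℕ) :
    K.getD j 0 ≤ L.length := by
  rcases lt_or_ge j K.length with hj | hj
  · obtain ⟨s, -, hs⟩ := mem_map.1 (hK.subset (getD_mem_of_lt hj))
    exact hs ▸ length_filter_le _ _
  · rw [getD_eq_default _ _ hj]
    exact Nat.zero_le _

end List

def List.conjYoungDiagram (K : List ℕ) : YoungDiagram where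
  cells := {c ∈ Finset.range (K.foldr max 0) ×ˢ Finset.range K.length | c.2 < K.countGT c.1}
  isLowerSet := by
    intro a b hba ha
    simp only [coe_filter, Finset.mem_product, Finset.mem_range] at ha ⊢
    exact ⟨⟨hba.1.trans_lt ha.1.1, hba.2.trans_lt ha.1.2⟩,
      hba.2.trans_lt (ha.2.trans_le (K.countGT_antitone hba.1))⟩

lemma List.mem_conjYoungDiagram {K : List ℕ} {c : ℕ × ℕ} :
    c ∈ K.conjYoungDiagram.cells ↔ c.2 < K.countGT c.1 := by
  refine ⟨fun h => (Finset.mem_filter.1 h).2,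
    fun h => Finset.mem_filter.2 ⟨Finset.mem_product.2 ⟨?_, ?_⟩, h⟩⟩
  · refine Finset.mem_range.2 (not_le.1 fun hc => ?_)
    have := K.countGT_antitone hc
    rw [countGT_foldr_max] at this
    omega
  · exact Finset.mem_range.2 (h.trans_le (length_filter_le _ _))

section Diagram

variable {E F : Finset (ℕ × ℕ)} {w : ℕ → ℕ} {s : Finset ℕ}

lemma rowComp_pos_of_mem {p : ℕ × ℕ} (hp : p ∈ E) : 0 < rowComp E p.1 :=
  card_pos.2 ⟨p, mem_filter.2 ⟨hp, rfl⟩⟩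

lemma colComp_pos_of_mem {p : ℕ × ℕ} (hp : p ∈ E) : 0 < colComp E p.2 :=
  card_pos.2 ⟨p, mem_filter.2 ⟨hp, rfl⟩⟩

lemma isPrincipalDiagram_of_comp_eq {L K : List ℕ} (hL : ∀ a ∈ L, 0 < a) (hK : ∀ a ∈ K, 0 < a)
    (hrow : ∀ i, rowComp E i = L.getD i 0) (hcol : ∀ j, colComp E j = K.getD j 0) :
    IsPrincipalDiagram E := by
  constructor
  · intro c hc i hi
    have hc : c.1 < L.length := List.lt_length_of_getD_pos (hrow c.1 ▸ rowComp_pos_of_mem hc)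
    have hpos : 0 < rowComp E i := hrow i ▸ hL _ (List.getD_mem_of_lt (hi.trans hc))
    obtain ⟨p, hp⟩ := card_pos.1 hpos
    exact ⟨p.2, (mem_filter.1 hp).2 ▸ (mem_filter.1 hp).1⟩
  · intro c hc j hj
    have hc : c.2 < K.length := List.lt_length_of_getD_pos (hcol c.2 ▸ colComp_pos_of_mem hc)
    have hpos : 0 < colComp E j := hcol j ▸ hK _ (List.getD_mem_of_lt (hj.trans hc))
    obtain ⟨p, hp⟩ := card_pos.1 hpos
    exact ⟨p.1, (mem_filter.1 hp).2 ▸ (mem_filter.1 hp).1⟩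

lemma isSpecialDiagram_of_mem_iff (e e' : Equiv.Perm ℕ) (Y : YoungDiagram)
    (h : ∀ p, p ∈ E ↔ (e p.1, e' p.2) ∈ Y.cells) : IsSpecialDiagram E := by
  refine ⟨e.symm, e'.symm, e.symm.bijective, e'.symm.bijective, Y, ext fun p => ?_⟩
  rw [h, mem_image]
  constructor
  · exact fun hp => ⟨_, hp, by simp⟩
  · rintro ⟨c, hc, rfl⟩
    simpa using hc

lemma sum_comp_fst_eq_sum_rowComp (hE : ∀ p ∈ E, p.1 ∈ s) :
    ∑ p ∈ E, w p.1 = ∑ i ∈ s, rowComp E i * w i := by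
  rw [← sum_fiberwise_of_maps_to hE]
  refine sum_congr rfl fun i _ => ?_
  rw [sum_congr rfl fun p hp => congrArg w (mem_filter.1 hp).2, sum_const, smul_eq_mul, rowComp]

def colWeights (w : ℕ → ℕ) (E : Finset (ℕ × ℕ)) (j : ℕ) : Finset ℕ :=
  {p ∈ E | p.2 = j}.image (w ∘ Prod.fst)

lemma injOn_comp_fst_filter (hw : Set.InjOn w s) (hE : ∀ p ∈ E, p.1 ∈ s) (j : ℕ) :
    Set.InjOn (w ∘ Prod.fst) (({p ∈ E | p.2 = j} : Finset (ℕ × ℕ)) : Set (ℕ × ℕ)) := by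
  intro p hp q hq hpq
  simp only [coe_filter] at hp hq
  exact Prod.ext (hw (hE p hp.1) (hE q hq.1) hpq) (hp.2.trans hq.2.symm)

lemma card_colWeights (hw : Set.InjOn w s) (hE : ∀ p ∈ E, p.1 ∈ s) (j : ℕ) :
    #(colWeights w E j) = colComp E j :=
  card_image_of_injOn (injOn_comp_fst_filter hw hE j)

lemma sum_comp_fst_eq_sum_colWeights (hw : Set.InjOn w s) (hE : ∀ p ∈ E, p.1 ∈ s)
    {t : Finset ℕ} (ht : ∀ p ∈ E, p.2 ∈ t) :
    ∑ p ∈ E, w p.1 = ∑ j ∈ t, ∑ x ∈ colWeights w E j, x := by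
  rw [← sum_fiberwise_of_maps_to ht]
  refine sum_congr rfl fun j _ => ?_
  rw [colWeights, sum_image (injOn_comp_fst_filter hw hE j)]
  rfl

lemma mem_iff_mem_colWeights (hw : Set.InjOn w s) (hE : ∀ p ∈ E, p.1 ∈ s) {p : ℕ × ℕ} :
    p ∈ E ↔ p.1 ∈ s ∧ w p.1 ∈ colWeights w E p.2 := by
  refine ⟨fun hp => ⟨hE p hp, mem_image.2 ⟨p, mem_filter.2 ⟨hp, rfl⟩, rfl⟩⟩, ?_⟩
  rintro ⟨hp, hpw⟩
  obtain ⟨q, hq, hqw⟩ := mem_image.1 hpw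
  rw [mem_filter] at hq
  exact Prod.ext (hw (hE q hq.1) hp hqw) hq.2 ▸ hq.1

theorem eq_of_comp_eq_of_colWeights_eq_range (hw : Set.InjOn w s) (hE : ∀ p ∈ E, p.1 ∈ s)
    (hF : ∀ p ∈ F, p.1 ∈ s) (hrow : ∀ i, rowComp E i = rowComp F i)
    (hcol : ∀ j, colComp E j = colComp F j) (hFw : ∀ j, colWeights w F j = range (colComp F j)) :
    E = F := by
  classical
  set t := (E ∪ F).image Prod.snd
  have hEt : ∀ p ∈ E, p.2 ∈ t := fun p hp => mem_image_of_mem _ (mem_union_left _ hp)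
  have hFt : ∀ p ∈ F, p.2 ∈ t := fun p hp => mem_image_of_mem _ (mem_union_right _ hp)
  have hsum : ∑ j ∈ t, ∑ x ∈ colWeights w E j, x = ∑ j ∈ t, ∑ x ∈ colWeights w F j, x := by
    rw [← sum_comp_fst_eq_sum_colWeights hw hE hEt, ← sum_comp_fst_eq_sum_colWeights hw hF hFt,
      sum_comp_fst_eq_sum_rowComp hE, sum_comp_fst_eq_sum_rowComp hF]
    simp_rw [hrow]
  have hEw : ∀ j ∈ t, colWeights w E j = colWeights w F j := by
    intro j hj
    by_contra hne
    refine hsum.not_gt (sum_lt_sum (fun j _ => ?_) ⟨j, hj, ?_⟩)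
    · rw [hFw, ← hcol, ← card_colWeights hw hE]
      exact sum_range_card_le_sum _
    · rw [hFw, ← hcol, ← card_colWeights hw hE]
      exact sum_range_card_lt_sum (by rwa [card_colWeights hw hE, hcol, ← hFw])
  ext p
  by_cases hp : p.2 ∈ t
  · rw [mem_iff_mem_colWeights hw hE, mem_iff_mem_colWeights hw hF, hEw p.2 hp]
  · exact iff_of_false (fun h => hp (hEt p h)) (fun h => hp (hFt p h))

end Diagram

/-- Column `j` consists of the `K[j]` rows carrying the largest parts of `L`. -/
def fillDiagram (L K : List ℕ) : Finset (ℕ × ℕ) :=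
  {p ∈ range L.length ×ˢ range K.length | L.sortRank p.1 < K.getD p.2 0}

section fillDiagram

variable {L K : List ℕ}

lemma mem_fillDiagram {p : ℕ × ℕ} : p ∈ fillDiagram L K ↔
    p.1 < L.length ∧ p.2 < K.length ∧ L.sortRank p.1 < K.getD p.2 0 := by
  simp [fillDiagram, and_assoc]

lemma rowComp_fillDiagram (hK : K.Perm L.conjugate) (i : ℕ) :
    rowComp (fillDiagram L K) i = L.getD i 0 := by
  rcases lt_or_ge i L.length with hi | hi
  · have hcount : K.countGT (L.sortRank i) = L.conjugate.countGT (L.sortRank i) :=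
      (hK.filter _).length_eq
    rw [← L.countGT_conjugate_sortRank hi, ← hcount, K.countGT_eq_card]
    refine card_nbij' Prod.snd (fun j => (i, j)) ?_ ?_ ?_ ?_
    · intro p hp
      simp only [mem_coe, mem_filter, mem_fillDiagram, mem_range] at hp ⊢
      exact ⟨hp.1.2.1, hp.2 ▸ hp.1.2.2⟩
    · intro j hj
      simp only [mem_coe, mem_filter, mem_fillDiagram, mem_range] at hj ⊢
      exact ⟨⟨hi, hj⟩, trivial⟩
    · intro p hp
      exact Prod.ext (mem_filter.1 hp).2.symm rfl
    · intro j _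
      rfl
  · rw [List.getD_eq_default _ _ hi, rowComp, card_eq_zero, filter_eq_empty_iff]
    intro p hp hpi
    exact hi.not_gt (hpi ▸ (mem_fillDiagram.1 hp).1)

lemma colWeights_fillDiagram (hK : K.Perm L.conjugate) (j : ℕ) :
    colWeights L.sortRank (fillDiagram L K) j = range (K.getD j 0) := by
  calc colWeights L.sortRank (fillDiagram L K) j
      = {i ∈ range L.length | L.sortRank i < K.getD j 0}.image L.sortRank := by
        ext x
        simp only [colWeights, mem_image, mem_filter, mem_fillDiagram, Function.comp_apply,
          mem_range]
        constructor
        · rintro ⟨p, ⟨⟨hp1, -, hp⟩, rfl⟩, rfl⟩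
          exact ⟨p.1, ⟨hp1, hp⟩, rfl⟩
        · rintro ⟨i, ⟨hi, hij⟩, rfl⟩
          exact ⟨(i, j), ⟨⟨hi, List.lt_length_of_getD_pos (pos_of_gt hij), hij⟩, rfl⟩, rfl⟩
    _ = range (K.getD j 0) := by
        rw [L.image_filter_sortRank_lt, min_eq_left (List.getD_le_length_of_perm_conjugate hK j)]

lemma colComp_fillDiagram (hK : K.Perm L.conjugate) (j : ℕ) :
    colComp (fillDiagram L K) j = K.getD j 0 := by
  rw [← card_colWeights L.sortRank_injOn fun p hp => mem_range.2 (mem_fillDiagram.1 hp).1,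
    colWeights_fillDiagram hK, card_range]

lemma eq_fillDiagram (hK : K.Perm L.conjugate) {E : Finset (ℕ × ℕ)}
    (hrow : ∀ i, rowComp E i = L.getD i 0) (hcol : ∀ j, colComp E j = K.getD j 0) :
    E = fillDiagram L K := by
  refine eq_of_comp_eq_of_colWeights_eq_range L.sortRank_injOn
    (fun p hp => mem_range.2 (List.lt_length_of_getD_pos (hrow p.1 ▸ rowComp_pos_of_mem hp)))
    (fun p hp => mem_range.2 (mem_fillDiagram.1 hp).1) (fun i => ?_) (fun j => ?_) (fun j => ?_)
  · rw [hrow, rowComp_fillDiagram hK]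
  · rw [hcol, colComp_fillDiagram hK]
  · rw [colWeights_fillDiagram hK, colComp_fillDiagram hK]

lemma isSpecialDiagram_fillDiagram (hK : K.Perm L.conjugate) :
    IsSpecialDiagram (fillDiagram L K) := by
  obtain ⟨e, he, hen⟩ := L.exists_perm_eqOn_sortRank
  obtain ⟨e', he', hek⟩ := K.exists_perm_eqOn_sortRank
  refine isSpecialDiagram_of_mem_iff e e' K.conjYoungDiagram fun p => ?_
  rw [mem_fillDiagram, List.mem_conjYoungDiagram]
  by_cases hj : p.2 < K.length
  · rw [he' _ hj, K.sortRank_lt_countGT_iff hj]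
    by_cases hi : p.1 < L.length
    · simp [he _ hi, hi, hj]
    · have := (hen p.1).not.2 hi
      have := List.getD_le_length_of_perm_conjugate hK p.2
      simp only [hi, false_and, false_iff]
      omega
  · have := (hek p.2).not.2 hj
    have := (List.length_filter_le (fun a => decide (e p.1 < a)) K)
    simp only [hj, false_and, and_false, false_iff, List.countGT]
    omega

end fillDiagram

/-- if `λ` and `μ` are compositions of `m` with `λ'' = μ'` (i.e. `μ` is a
rearrangement of the conjugate `λ'`), then there is a unique diagram with
row-composition `λ` and column-composition `μ`, and it is a special diagram. -/
theorem stmt18 (m : ℕ) (lam mu : Composition m)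
    (h : (mu.blocks : Multiset ℕ) =
      (((List.range (lam.blocks.foldr max 0)).map
          (fun j => (lam.blocks.filter (fun a => decide (j < a))).length)) : List ℕ)) :
    (∃! D : Finset (ℕ × ℕ), IsPrincipalDiagram D ∧
        (∀ i, rowComp D i = lam.blocks.getD i 0) ∧
        (∀ j, colComp D j = mu.blocks.getD j 0)) ∧
    (∀ D : Finset (ℕ × ℕ), IsPrincipalDiagram D →
        (∀ i, rowComp D i = lam.blocks.getD i 0) →
        (∀ j, colComp D j = mu.blocks.getD j 0) →
        IsSpecialDiagram D) := by
  have hK : mu.blocks.Perm lam.blocks.conjugate := Multiset.coe_eq_coe.mp h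
  have hrow := rowComp_fillDiagram hK
  have hcol := colComp_fillDiagram hK
  refine ⟨⟨fillDiagram lam.blocks mu.blocks, ⟨?_, hrow, hcol⟩,
    fun D hD => eq_fillDiagram hK hD.2.1 hD.2.2⟩,
    fun D _ hrowD hcolD => eq_fillDiagram hK hrowD hcolD ▸ isSpecialDiagram_fillDiagram hK⟩
  exact isPrincipalDiagram_of_comp_eq (fun _ => lam.blocks_pos) (fun _ => mu.blocks_pos) hrow hcol
end
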